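/- arXiv:1507.03789 — 5 statements merged into one kernel-verified Lean document; each statement's English description precedes it below -/
import Mathlib

section
/- Let $K \subset \mathbb{R}^2$ be a compact convex body whose support function $h(\vartheta) = \sup_{y \in K} \langle (\cos\vartheta, \sin\vartheta), y \rangle$ is twice continuously differentiable with $h(\vartheta) + h''(\vartheta) > 0$ for all $\vartheta$. Fix $\vartheta_0 \in \mathbb{R}$ and let $i(\vartheta) = h(\vartheta) n_\vartheta - \big(\int_{\vartheta_0}^{\vartheta} h(\tau)\,d\tau - h'(\vartheta_0)\big) t_\vartheta$ be the left involute of $\partial K$ starting at $x_0 = h(\vartheta_0) n_{\vartheta_0} + h'(\vartheta_0) t_{\vartheta_0}$. Then $i$ is differentiable on $[\vartheta_0, \infty)$ with $i'(\vartheta) = \big(\int_{\vartheta_0}^{\vartheta} h(\tau)\,d\tau + h'(\vartheta) - h'(\vartheta_0)\big) n_\vartheta$, and $i$ is injective on $[\vartheta_0, \vartheta_0 + 2\pi)$. -/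
/-!
The derivative formula is the product rule together with `n' = t`, `t' = -n`. Writing
`s(ϑ) = ∫_{ϑ₀}^{ϑ} h + h'(ϑ) - h'(ϑ₀)`, we have `s' = h + h'' > 0`, so `s` is strictly increasing.
If `i(a) = i(b)` with `a < b < a + 2π`, then `∫_a^b s(ϑ) n_ϑ dϑ = 0`; pairing with `t_m` for the
midpoint `m` gives `∫_a^b s(ϑ) sin(ϑ - m) dϑ = 0`. Since `∫_a^b sin(ϑ - m) dϑ = 0`, we may replace
`s(ϑ)` by `s(ϑ) - s(m)`, and then the integrand is positive on both halves, a contradiction.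
-/

open Real MeasureTheory

noncomputable def vec2 (a b : ℝ) : EuclideanSpace ℝ (Fin 2) :=
  (WithLp.equiv 2 (Fin 2 → ℝ)).symm ![a, b]

/-- The outer normal direction `n_ϑ = (cos ϑ, sin ϑ)`. -/
noncomputable def nvec (θ : ℝ) : EuclideanSpace ℝ (Fin 2) := vec2 (Real.cos θ) (Real.sin θ)

/-- The tangent direction `t_ϑ = (-sin ϑ, cos ϑ)`. -/
noncomputable def tvec (θ : ℝ) : EuclideanSpace ℝ (Fin 2) := vec2 (-Real.sin θ) (Real.cos θ)

lemma vec2_eq_continuousLinearEquiv (a b : ℝ) :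
    vec2 a b = (PiLp.continuousLinearEquiv 2 ℝ (fun _ : Fin 2 => ℝ)).symm ![a, b] := rfl

lemma hasDerivAt_vec2 {f g : ℝ → ℝ} {f' g' θ : ℝ} (hf : HasDerivAt f f' θ)
    (hg : HasDerivAt g g' θ) :
    HasDerivAt (fun t => vec2 (f t) (g t)) (vec2 f' g') θ := by
  have hpi : HasDerivAt (fun t => (![f t, g t] : Fin 2 → ℝ)) ![f', g'] θ := by
    refine hasDerivAt_pi.2 fun j => ?_
    fin_cases j
    · simpa using hf
    · simpa using hg
  simp only [vec2_eq_continuousLinearEquiv]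
  exact (PiLp.continuousLinearEquiv 2 ℝ _).symm.hasFDerivAt.comp_hasDerivAt θ hpi

lemma inner_vec2 (a b c d : ℝ) : (inner ℝ (vec2 a b) (vec2 c d) : ℝ) = a * c + b * d := by
  simp [vec2, PiLp.inner_apply, Fin.sum_univ_two]
  ring

lemma hasDerivAt_nvec (θ : ℝ) : HasDerivAt nvec (tvec θ) θ :=
  hasDerivAt_vec2 (hasDerivAt_cos θ) (hasDerivAt_sin θ)

lemma hasDerivAt_tvec (θ : ℝ) : HasDerivAt tvec (-nvec θ) θ := by
  have hneg : vec2 (-cos θ) (-sin θ) = -nvec θ := by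
    ext j; fin_cases j <;> simp [vec2, nvec]
  exact hneg ▸ hasDerivAt_vec2 (hasDerivAt_sin θ).neg (hasDerivAt_cos θ)

lemma continuous_nvec : Continuous nvec :=
  continuous_iff_continuousAt.2 fun θ => (hasDerivAt_nvec θ).continuousAt

lemma inner_tvec_nvec (m θ : ℝ) : (inner ℝ (tvec m) (nvec θ) : ℝ) = sin (θ - m) := by
  rw [tvec, nvec, inner_vec2, sin_sub]; ring

lemma hasDerivAt_involute {h : ℝ → ℝ} (hc : Continuous h) {θ₀ c θ h' : ℝ}
    (hd : HasDerivAt h h' θ) :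
    HasDerivAt (fun t => h t • nvec t - ((∫ τ in θ₀..t, h τ) - c) • tvec t)
      (((∫ τ in θ₀..θ, h τ) + h' - c) • nvec θ) θ := by
  have hint := (hc.integral_hasStrictDerivAt θ₀ θ).hasDerivAt
  refine ((hd.smul (hasDerivAt_nvec θ)).sub
    ((hint.sub_const c).smul (hasDerivAt_tvec θ))).congr_deriv ?_
  module

lemma integral_sin_sub_midpoint (a b : ℝ) : ∫ θ in a..b, sin (θ - (a + b) / 2) = 0 := by
  rw [intervalIntegral.integral_comp_sub_right (fun x => sin x), integral_sin,
    show a - (a + b) / 2 = -(b - (a + b) / 2) by ring, cos_neg, sub_self]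

lemma integral_mul_sin_sub_midpoint_pos {s : ℝ → ℝ} {a b : ℝ}
    (hs : ContinuousOn s (Set.Icc a b)) (hmono : StrictMonoOn s (Set.Icc a b))
    (hab : a < b) (hba : b - a < 2 * π) :
    0 < ∫ θ in a..b, s θ * sin (θ - (a + b) / 2) := by
  set m := (a + b) / 2 with hm
  have ham : a < m := by linarith
  have hmb : m < b := by linarith
  have haI : a ∈ Set.Icc a b := Set.left_mem_Icc.2 hab.le
  have hbI : b ∈ Set.Icc a b := Set.right_mem_Icc.2 hab.le
  have hmI : m ∈ Set.Icc a b := ⟨ham.le, hmb.le⟩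
  set g := fun θ => (s θ - s m) * sin (θ - m)
  have hgc : ContinuousOn g (Set.Icc a b) := by fun_prop
  have hgi : ∀ {x y}, x ∈ Set.Icc a b → y ∈ Set.Icc a b → IntervalIntegrable g volume x y :=
    fun hx hy => (hgc.mono (Set.uIcc_subset_Icc hx hy)).intervalIntegrable
  have hleft : 0 < ∫ θ in a..m, g θ :=
    intervalIntegral.intervalIntegral_pos_of_pos_on (hgi haI hmI) (fun x hx =>
      mul_pos_of_neg_of_neg (sub_neg.2 (hmono ⟨hx.1.le, by linarith [hx.2]⟩ hmI hx.2))
        (sin_neg_of_neg_of_neg_pi_lt (by linarith [hx.2]) (by linarith [hx.1]))) ham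
  have hright : 0 < ∫ θ in m..b, g θ :=
    intervalIntegral.intervalIntegral_pos_of_pos_on (hgi hmI hbI) (fun x hx =>
      mul_pos (sub_pos.2 (hmono hmI ⟨by linarith [hx.1], hx.2.le⟩ hx.1))
        (sin_pos_of_pos_of_lt_pi (by linarith [hx.1]) (by linarith [hx.2]))) hmb
  have hsplit : ∫ θ in a..b, s θ * sin (θ - m) = ∫ θ in a..b, g θ := by
    have hsin : IntervalIntegrable (fun θ => s m * sin (θ - m)) volume a b :=
      Continuous.intervalIntegrable (by fun_prop) a b
    have hprod : IntervalIntegrable (fun θ => s θ * sin (θ - m)) volume a b :=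
      ContinuousOn.intervalIntegrable (by rw [Set.uIcc_of_le hab.le]; fun_prop)
    simp only [g, sub_mul]
    rw [intervalIntegral.integral_sub hprod hsin, intervalIntegral.integral_const_mul,
      integral_sin_sub_midpoint, mul_zero, sub_zero]
  rw [hsplit, ← intervalIntegral.integral_add_adjacent_intervals (hgi haI hmI)
    (hgi hmI hbI)]
  exact add_pos hleft hright

lemma injOn_of_hasDerivAt_smul_nvec {γ : ℝ → EuclideanSpace ℝ (Fin 2)} {s : ℝ → ℝ} {θ₀ : ℝ}
    (hs : ContinuousOn s (Set.Ico θ₀ (θ₀ + 2 * π)))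
    (hmono : StrictMonoOn s (Set.Ico θ₀ (θ₀ + 2 * π)))
    (hγ : ∀ θ ∈ Set.Ico θ₀ (θ₀ + 2 * π), HasDerivAt γ (s θ • nvec θ) θ) :
    Set.InjOn γ (Set.Ico θ₀ (θ₀ + 2 * π)) := by
  suffices key : ∀ a ∈ Set.Ico θ₀ (θ₀ + 2 * π), ∀ b ∈ Set.Ico θ₀ (θ₀ + 2 * π),
      a < b → γ a ≠ γ b from
    fun a ha b hb hab => by
      by_contra hne
      rcases lt_or_gt_of_ne hne with hlt | hlt
      exacts [key a ha b hb hlt hab, key b hb a ha hlt hab.symm]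
  intro a ha b hb hab heq
  have hsub : Set.Icc a b ⊆ Set.Ico θ₀ (θ₀ + 2 * π) := Set.Icc_subset_Ico ha.1 hb.2
  have hsub' : Set.uIcc a b ⊆ Set.Ico θ₀ (θ₀ + 2 * π) := Set.uIcc_of_le hab.le ▸ hsub
  have hint : IntervalIntegrable (fun θ => s θ • nvec θ) volume a b :=
    ((hs.mono hsub').smul continuous_nvec.continuousOn).intervalIntegrable
  have hzero : ∫ θ in a..b, s θ • nvec θ = 0 := by
    rw [intervalIntegral.integral_eq_sub_of_hasDerivAt (fun θ hθ => hγ θ (hsub' hθ)) hint,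
      heq, sub_self]
  set m := (a + b) / 2
  have hpair : ∫ θ in a..b, s θ * sin (θ - m) = 0 := by
    calc ∫ θ in a..b, s θ * sin (θ - m)
        = ∫ θ in a..b, innerSL ℝ (tvec m) (s θ • nvec θ) := by
          simp only [innerSL_apply_apply, real_inner_smul_right, inner_tvec_nvec]
      _ = innerSL ℝ (tvec m) (∫ θ in a..b, s θ • nvec θ) :=
          (innerSL ℝ (tvec m)).intervalIntegral_comp_comm hint
      _ = 0 := by rw [hzero, map_zero]
  have hpos := integral_mul_sin_sub_midpoint_pos (hs.mono hsub) (hmono.mono hsub) hab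
    (by linarith [ha.1, hb.2])
  linarith

theorem stmt_5_general
    (h : ℝ → ℝ)
    (hsm : ContDiff ℝ 2 h) (hpos : ∀ θ, 0 < h θ + deriv (deriv h) θ)
    (θ₀ : ℝ) (i : ℝ → EuclideanSpace ℝ (Fin 2))
    (hi : ∀ θ, i θ = h θ • nvec θ - ((∫ τ in θ₀..θ, h τ) - deriv h θ₀) • tvec θ) :
    (∀ θ, θ₀ ≤ θ →
      HasDerivAt i (((∫ τ in θ₀..θ, h τ) + deriv h θ - deriv h θ₀) • nvec θ) θ) ∧
    Set.InjOn i (Set.Ico θ₀ (θ₀ + 2 * Real.pi)) := by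
  have hc : Continuous h := hsm.continuous
  have hd : Differentiable ℝ h := hsm.differentiable (by norm_num)
  have hd' : Differentiable ℝ (deriv h) := hsm.differentiable_deriv_two
  set s := fun θ => (∫ τ in θ₀..θ, h τ) + deriv h θ - deriv h θ₀
  have hi' : ∀ θ, HasDerivAt i (s θ • nvec θ) θ := fun θ =>
    funext hi ▸ hasDerivAt_involute hc (hd θ).hasDerivAt
  have hs' : ∀ θ, HasDerivAt s (h θ + deriv (deriv h) θ) θ := fun θ =>
    ((hc.integral_hasStrictDerivAt θ₀ θ).hasDerivAt.add (hd' θ).hasDerivAt).sub_const _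
  have hmono : StrictMono s := strictMono_of_hasDerivAt_pos hs' hpos
  have hcont : Continuous s := continuous_iff_continuousAt.2 fun θ => (hs' θ).continuousAt
  exact ⟨fun θ _ => hi' θ, injOn_of_hasDerivAt_smul_nvec hcont.continuousOn
    (hmono.strictMonoOn _) fun θ _ => hi' θ⟩

/-- The left involute
`i(ϑ) = h(ϑ) n_ϑ - (∫_{ϑ₀}^{ϑ} h - h'(ϑ₀)) t_ϑ` of the boundary of a `C²⁺` convex body
`K ⊆ ℝ²` is differentiable on `[ϑ₀, ∞)` with
`i'(ϑ) = (∫_{ϑ₀}^{ϑ} h + h'(ϑ) - h'(ϑ₀)) n_ϑ`, and it is injective on `[ϑ₀, ϑ₀ + 2π)`. -/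
theorem stmt_5 (K : Set (EuclideanSpace ℝ (Fin 2)))
    (hne : K.Nonempty) (hcp : IsCompact K) (hcv : Convex ℝ K)
    (h : ℝ → ℝ)
    (hsupp : ∀ θ : ℝ, IsLUB ((fun y => (inner ℝ (nvec θ) y : ℝ)) '' K) (h θ))
    (hsm : ContDiff ℝ 2 h) (hpos : ∀ θ, 0 < h θ + deriv (deriv h) θ)
    (θ₀ : ℝ) (i : ℝ → EuclideanSpace ℝ (Fin 2))
    (hi : ∀ θ, i θ = h θ • nvec θ - ((∫ τ in θ₀..θ, h τ) - deriv h θ₀) • tvec θ) :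
    (∀ θ, θ₀ ≤ θ →
      HasDerivAt i (((∫ τ in θ₀..θ, h τ) + deriv h θ - deriv h θ₀) • nvec θ) θ) ∧
    Set.InjOn i (Set.Ico θ₀ (θ₀ + 2 * Real.pi)) :=
  stmt_5_general h hsm hpos θ₀ i hi
end

section
/- Let $K \subset \mathbb{R}^2$ be a compact convex body whose support function $h(\vartheta) = \sup_{y \in K} \langle (\cos\vartheta, \sin\vartheta), y \rangle$ is twice continuously differentiable with $h(\vartheta) + h''(\vartheta) > 0$ for all $\vartheta$. For $\vartheta_0 \in \mathbb{R}$ and $\vartheta > \vartheta_0$ set $i_{\vartheta_0}(\vartheta) = h(\vartheta) n_\vartheta - \big(\int_{\vartheta_0}^{\vartheta} h(\tau)\,d\tau - h'(\vartheta_0)\big) t_\vartheta$ (the left involute of $\partial K$ starting at the boundary point with outer normal $n_{\vartheta_0}$). Then for every $z \in \mathbb{R}^2 \setminus K$ there exists a unique pair $(\vartheta_0, \vartheta)$ with $\vartheta_0 \in [0, 2\pi)$ and $\vartheta > \vartheta_0$ such that $z = i_{\vartheta_0}(\vartheta)$; that is, the family of left involutes parameterized by starting point on $\partial K$ and arc length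 covers $\mathbb{R}^2 \setminus K$ bijectively. -/
open Real MeasureTheory

/-!
Write `F θ = ⟪n_θ, z⟫ - h θ` for how far `z` lies beyond the support line with normal `n_θ`.
Then `i_{θ₀}(θ) = z` means `F θ = 0` and `⟪t_θ, z⟫ = h'(θ₀) - ∫_{θ₀}^{θ} h`. The right-hand side
is strictly increasing in `θ₀` (its derivative is `h + h'' > 0`), equals `h'(θ)` at `θ₀ = θ` and
tends to `-∞`, so a zero `θ` of `F` admits a starting angle `θ₀ < θ`, necessarily unique, exactly
when `F'(θ) = ⟪t_θ, z⟫ - h'(θ) < 0`. These are the zeros where `F` crosses downwards: at a zero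
`F'' = -(h + h'') < 0`, which rules out `F' = 0` there. Separation gives `F > 0` somewhere, and
`F θ + F (θ + π) ≤ 0`, so a downward crossing exists; since `h` is sublinear, `F > 0` at the ends
of an arc shorter than `π` forces `F > 0` inside it, and this leaves room for only one downward
crossing modulo `2π`. Periodicity finally moves `θ₀` into `[0, 2π)`.
-/

open Set Filter Topology intervalIntegral
open scoped RealInnerProductSpace

local notation "ℝ²" => EuclideanSpace ℝ (Fin 2)

lemma inner_nvec (θ : ℝ) (y : ℝ²) :
    ⟪nvec θ, y⟫ = cos θ * y 0 + sin θ * y 1 := by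
  simp [nvec, vec2, PiLp.inner_apply, Fin.sum_univ_two]
  ring

lemma inner_tvec (θ : ℝ) (y : ℝ²) :
    ⟪tvec θ, y⟫ = -sin θ * y 0 + cos θ * y 1 := by
  simp [tvec, vec2, PiLp.inner_apply, Fin.sum_univ_two]
  ring

lemma smul_nvec_sub_smul_tvec_eq_iff {a b θ : ℝ} {z : ℝ²} :
    a • nvec θ - b • tvec θ = z ↔ ⟪nvec θ, z⟫ = a ∧ ⟪tvec θ, z⟫ = -b := by
  have hsc := sin_sq_add_cos_sq θ
  rw [inner_nvec, inner_tvec]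
  constructor
  · rintro rfl
    simp only [nvec, tvec, vec2, PiLp.sub_apply, PiLp.smul_apply, WithLp.equiv_symm_apply,
      Matrix.cons_val_zero, Matrix.cons_val_one, smul_eq_mul]
    constructor
    · linear_combination a * hsc
    · linear_combination (-b) * hsc
  · rintro ⟨hn, ht⟩
    ext i
    fin_cases i
    · show a * cos θ - b * -sin θ = z 0
      linear_combination (-cos θ) * hn + sin θ * ht + z 0 * hsc
    · show a * sin θ - b * cos θ = z 1
      linear_combination (-sin θ) * hn - cos θ * ht + z 1 * hsc

lemma periodic_nvec : Function.Periodic nvec (2 * π) := fun θ => by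
  simp only [nvec, cos_add_two_pi, sin_add_two_pi]

lemma periodic_tvec : Function.Periodic tvec (2 * π) := fun θ => by
  simp only [tvec, cos_add_two_pi, sin_add_two_pi]

lemma nvec_add_pi (θ : ℝ) : nvec (θ + π) = -nvec θ := by
  ext i
  fin_cases i <;> simp [nvec, vec2, cos_add_pi, sin_add_pi]

lemma hasDerivAt_inner_nvec (z : ℝ²) (θ : ℝ) :
    HasDerivAt (fun θ => ⟪nvec θ, z⟫) ⟪tvec θ, z⟫ θ := by
  simp only [inner_nvec, inner_tvec]
  exact ((hasDerivAt_cos θ).mul_const _).add ((hasDerivAt_sin θ).mul_const _)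

lemma hasDerivAt_inner_tvec (z : ℝ²) (θ : ℝ) :
    HasDerivAt (fun θ => ⟪tvec θ, z⟫) (-⟪nvec θ, z⟫) θ := by
  simp only [inner_nvec, inner_tvec]
  exact ((hasDerivAt_sin θ).neg.mul_const (z 0)).add ((hasDerivAt_cos θ).mul_const (z 1))
    |>.congr_deriv (by ring)

lemma sin_sub_smul_nvec (θ₁ θ θ₂ : ℝ) :
    sin (θ₂ - θ₁) • nvec θ = sin (θ₂ - θ) • nvec θ₁ + sin (θ - θ₁) • nvec θ₂ := by
  ext i
  fin_cases i <;>
  · simp [nvec, vec2, sin_sub]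
    ring

lemma exists_pos_smul_nvec {v : ℝ²} (hv : v ≠ 0) :
    ∃ r : ℝ, 0 < r ∧ ∃ σ, v = r • nvec σ := by
  set w : ℂ := ⟨v 0, v 1⟩
  have hw : w ≠ 0 := by
    intro hw
    apply hv
    ext i
    fin_cases i
    · exact congrArg Complex.re hw
    · exact congrArg Complex.im hw
  have hr : ‖w‖ ≠ 0 := norm_ne_zero_iff.2 hw
  refine ⟨‖w‖, norm_pos_iff.2 hw, w.arg, ?_⟩
  ext i
  fin_cases i
  · simp [nvec, vec2, Complex.cos_arg hw]
    exact (mul_div_cancel₀ _ hr).symm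
  · simp [nvec, vec2, Complex.sin_arg]
    exact (mul_div_cancel₀ _ hr).symm

def IsSupportFunction (K : Set ℝ²) (h : ℝ → ℝ) : Prop :=
  ∀ θ, IsLUB ((fun y => ⟪nvec θ, y⟫) '' K) (h θ)

namespace IsSupportFunction

variable {K : Set ℝ²} {h : ℝ → ℝ}

lemma periodic (hsupp : IsSupportFunction K h) :
    Function.Periodic h (2 * π) := fun θ => by
  have := hsupp (θ + 2 * π)
  rw [periodic_nvec θ] at this
  exact this.unique (hsupp θ)

lemma inner_le (hsupp : IsSupportFunction K h)
    {y : ℝ²} (hy : y ∈ K) (θ : ℝ) : ⟪nvec θ, y⟫ ≤ h θ :=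
  (hsupp θ).1 ⟨y, hy, rfl⟩

lemma mul_le_of_smul_nvec_eq (hsupp : IsSupportFunction K h)
    {a b c θ θ₁ θ₂ : ℝ} (ha : 0 ≤ a) (hb : 0 ≤ b) (hc : 0 < c)
    (hcomb : c • nvec θ = a • nvec θ₁ + b • nvec θ₂) :
    c * h θ ≤ a * h θ₁ + b * h θ₂ := by
  rw [mul_comm, ← le_div_iff₀ hc]
  refine (hsupp θ).2 ?_
  rintro _ ⟨y, hy, rfl⟩
  have hy' : c * ⟪nvec θ, y⟫ = a * ⟪nvec θ₁, y⟫ + b * ⟪nvec θ₂, y⟫ := by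
    rw [← real_inner_smul_left, hcomb, inner_add_left, real_inner_smul_left,
      real_inner_smul_left]
  rw [le_div_iff₀ hc, mul_comm, hy']
  gcongr <;> exact hsupp.inner_le hy _

lemma exists_lt_inner_nvec (hsupp : IsSupportFunction K h) (hne : K.Nonempty)
    (hcv : Convex ℝ K) (hcl : IsClosed K) {z : ℝ²} (hz : z ∉ K) :
    ∃ σ, h σ < ⟪nvec σ, z⟫ := by
  obtain ⟨φ, u, hK, hzu⟩ := geometric_hahn_banach_closed_point hcv hcl hz
  obtain ⟨v, hφ⟩ : ∃ v : ℝ², ∀ y, φ y = ⟪v, y⟫ :=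
    ⟨_, fun y => InnerProductSpace.toDual_symm_apply.symm⟩
  have hv : v ≠ 0 := by
    rintro rfl
    obtain ⟨y, hy⟩ := hne
    have := hK y hy
    simp only [hφ, inner_zero_left] at this hzu
    linarith
  obtain ⟨r, hr, σ, rfl⟩ := exists_pos_smul_nvec hv
  simp only [hφ, real_inner_smul_left] at hK hzu
  refine ⟨σ, lt_of_le_of_lt ((hsupp σ).2 ?_) ((div_lt_iff₀' hr).2 hzu)⟩
  rintro _ ⟨y, hy, rfl⟩
  exact ((lt_div_iff₀' hr).2 (hK y hy)).le

end IsSupportFunction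

noncomputable def supportExcess (h : ℝ → ℝ) (z : ℝ²) (θ : ℝ) : ℝ := ⟪nvec θ, z⟫ - h θ

section SupportExcess

variable {K : Set ℝ²} {h : ℝ → ℝ} {z : ℝ²}

lemma supportExcess_pos_of_mem_Ioo (hsupp : IsSupportFunction K h)
    {θ₁ θ θ₂ : ℝ} (h₁ : θ₁ < θ) (h₂ : θ < θ₂) (hπ : θ₂ - θ₁ < π)
    (hpos₁ : 0 < supportExcess h z θ₁) (hpos₂ : 0 < supportExcess h z θ₂) :
    0 < supportExcess h z θ := by
  have hs₁ : 0 < sin (θ₂ - θ) := sin_pos_of_pos_of_lt_pi (by linarith) (by linarith)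
  have hs₂ : 0 < sin (θ - θ₁) := sin_pos_of_pos_of_lt_pi (by linarith) (by linarith)
  have hs : 0 < sin (θ₂ - θ₁) := sin_pos_of_pos_of_lt_pi (by linarith) (by linarith)
  have hcomb := sin_sub_smul_nvec θ₁ θ θ₂
  have hsupp_le := hsupp.mul_le_of_smul_nvec_eq hs₁.le hs₂.le hs hcomb
  have hz := congrArg (fun v => ⟪v, z⟫) hcomb
  simp only [inner_add_left, real_inner_smul_left] at hz
  unfold supportExcess at *
  refine pos_of_mul_pos_right (a := sin (θ₂ - θ₁)) ?_ hs.le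
  linarith [mul_pos hs₁ hpos₁, mul_pos hs₂ hpos₂]

lemma supportExcess_add_supportExcess_add_pi_nonpos (hne : K.Nonempty)
    (hsupp : IsSupportFunction K h) (θ : ℝ) :
    supportExcess h z θ + supportExcess h z (θ + π) ≤ 0 := by
  obtain ⟨y, hy⟩ := hne
  have h₁ := hsupp.inner_le hy θ
  have h₂ := hsupp.inner_le hy (θ + π)
  simp only [supportExcess, nvec_add_pi, inner_neg_left] at h₂ ⊢
  linarith

lemma hasDerivAt_supportExcess {θ : ℝ} (hd : DifferentiableAt ℝ h θ) :
    HasDerivAt (supportExcess h z) (⟪tvec θ, z⟫ - deriv h θ) θ :=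
  (hasDerivAt_inner_nvec z θ).sub hd.hasDerivAt

lemma hasDerivAt_inner_tvec_sub_deriv {θ : ℝ} (hd : DifferentiableAt ℝ (deriv h) θ) :
    HasDerivAt (fun θ => ⟪tvec θ, z⟫ - deriv h θ) (-⟪nvec θ, z⟫ - deriv (deriv h) θ) θ :=
  (hasDerivAt_inner_tvec z θ).sub hd.hasDerivAt

end SupportExcess

def IsDownCrossing (F : ℝ → ℝ) (b : ℝ) : Prop :=
  F b = 0 ∧ ∀ᶠ x in 𝓝[<] b, 0 < F x

section DownCrossing

variable {F : ℝ → ℝ}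

lemma tendsto_add_const_nhdsLT (a c : ℝ) : Tendsto (· + c) (𝓝[<] a) (𝓝[<] (a + c)) :=
  (continuous_add_const c).continuousWithinAt.tendsto_nhdsWithin fun _ hx => by simpa using hx

lemma IsDownCrossing.add_period {b c : ℝ} (hF : Function.Periodic F c)
    (hb : IsDownCrossing F b) : IsDownCrossing F (b + c) := by
  refine ⟨(hF b).trans hb.1, ?_⟩
  have := (tendsto_add_const_nhdsLT (b + c) (-c)).eventually (by simpa using hb.2)
  filter_upwards [this] with x hx
  rwa [← sub_eq_add_neg, hF.sub_eq] at hx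

lemma exists_isDownCrossing_mem_Ioc (hF : Continuous F) {a c : ℝ} (hac : a < c)
    (ha : 0 < F a) (hc : F c ≤ 0) : ∃ b ∈ Ioc a c, IsDownCrossing F b := by
  set S := Icc a c ∩ F ⁻¹' Iic 0
  have hS : IsClosed S := isClosed_Icc.inter (isClosed_le hF continuous_const)
  have hcS : c ∈ S := ⟨⟨hac.le, le_rfl⟩, hc⟩
  have hbdd : BddBelow S := ⟨a, fun x hx => hx.1.1⟩
  have hbS : sInf S ∈ S := hS.csInf_mem ⟨c, hcS⟩ hbdd
  have hab : a < sInf S := hbS.1.1.lt_of_ne fun h => (h ▸ hbS.2 : F a ≤ 0).not_gt ha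
  have hpos : ∀ x ∈ Ioo a (sInf S), 0 < F x := fun x hx => by
    by_contra! hx'
    exact (csInf_le hbdd ⟨⟨hx.1.le, hx.2.le.trans hbS.1.2⟩, hx'⟩).not_gt hx.2
  have hleft : ∀ᶠ x in 𝓝[<] sInf S, 0 < F x :=
    eventually_of_mem (Ioo_mem_nhdsLT hab) hpos
  refine ⟨sInf S, ⟨hab, hbS.1.2⟩, le_antisymm hbS.2 ?_, hleft⟩
  exact ge_of_tendsto (hF.tendsto _ |>.mono_left nhdsWithin_le_nhds)
    (hleft.mono fun _ hx => hx.le)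

lemma HasDerivAt.eventually_nhdsLT_lt {b f' : ℝ} (hd : HasDerivAt F f' b) (hf' : 0 < f') :
    ∀ᶠ x in 𝓝[<] b, F x < F b := by
  have hslope : Tendsto (slope F b) (𝓝[<] b) (𝓝 f') :=
    (hasDerivAt_iff_tendsto_slope.1 hd).mono_left (nhdsLT_le_nhdsNE b)
  filter_upwards [hslope.eventually_const_lt hf', self_mem_nhdsWithin] with x hx hxb
  rw [slope_def_field] at hx
  have hxb' : x - b < 0 := sub_neg.2 hxb
  obtain ⟨hFx, -⟩ := (div_pos_iff.1 hx).resolve_left fun h => h.2.not_gt hxb'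
  linarith

lemma HasDerivAt.eventually_nhdsLT_gt {b f' : ℝ} (hd : HasDerivAt F f' b) (hf' : f' < 0) :
    ∀ᶠ x in 𝓝[<] b, F b < F x := by
  simpa using hd.neg.eventually_nhdsLT_lt (neg_pos.2 hf')

lemma eventually_nhdsLT_lt_of_deriv_pos {F' : ℝ → ℝ} {b : ℝ}
    (hF : ∀ x, HasDerivAt F (F' x) x) (hpos : ∀ᶠ x in 𝓝[<] b, 0 < F' x) :
    ∀ᶠ x in 𝓝[<] b, F x < F b := by
  obtain ⟨c, hcb, hsub⟩ := mem_nhdsLT_iff_exists_Ioo_subset.1 hpos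
  have hmono : StrictMonoOn F (Ioc c b) := by
    refine strictMonoOn_of_deriv_pos (convex_Ioc c b)
      (fun x _ => (hF x).continuousAt.continuousWithinAt) fun x hx => ?_
    rw [interior_Ioc] at hx
    exact (hF x).deriv ▸ hsub hx
  filter_upwards [Ioo_mem_nhdsLT hcb] with x hx
  exact hmono ⟨hx.1, hx.2.le⟩ ⟨hcb, le_rfl⟩ hx.2

lemma isDownCrossing_of_hasDerivAt {b f' : ℝ} (hd : HasDerivAt F f' b) (h0 : F b = 0)
    (hf' : f' < 0) : IsDownCrossing F b :=
  ⟨h0, h0 ▸ hd.eventually_nhdsLT_gt hf'⟩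

lemma IsDownCrossing.deriv_neg {F' : ℝ → ℝ} {b f'' : ℝ} (hF : ∀ x, HasDerivAt F (F' x) x)
    (hF' : HasDerivAt F' f'' b) (hf'' : f'' < 0) (hb : IsDownCrossing F b) : F' b < 0 := by
  have hneg : ¬ ∀ᶠ x in 𝓝[<] b, F x < F b := fun hlt => by
    obtain ⟨x, hx, hx'⟩ := (hlt.and hb.2).exists
    linarith [hb.1]
  rcases lt_trichotomy (F' b) 0 with hlt | heq | hgt
  · exact hlt
  · refine absurd (eventually_nhdsLT_lt_of_deriv_pos hF ?_) hneg
    simpa [heq] using hF'.eventually_nhdsLT_gt hf''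
  · exact absurd ((hF b).eventually_nhdsLT_lt hgt) hneg

end DownCrossing

section ShortArcs

variable {F : ℝ → ℝ}
  (harc : ∀ {θ₁ θ θ₂}, θ₁ < θ → θ < θ₂ → θ₂ - θ₁ < π → 0 < F θ₁ → 0 < F θ₂ → 0 < F θ)
  (hanti : ∀ θ, F θ + F (θ + π) ≤ 0)

include harc in
lemma not_isDownCrossing_of_lt_of_lt_add_pi {a b : ℝ} (ha : IsDownCrossing F a) (hab : a < b)
    (hb : b < a + π) : ¬ IsDownCrossing F b := fun hb' => by
  obtain ⟨x, hFx, hx⟩ := (hb'.2.and (Ioo_mem_nhdsLT hab)).exists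
  obtain ⟨y, hFy, hy⟩ := (ha.2.and (Ioo_mem_nhdsLT (show x - π < a by linarith [hx.2]))).exists
  have := harc hy.2 hx.1 (by linarith [hy.1]) hFy hFx
  linarith [ha.1]

include hanti in
lemma not_isDownCrossing_add_pi {a : ℝ} (ha : IsDownCrossing F a) :
    ¬ IsDownCrossing F (a + π) := fun hb => by
  obtain ⟨x, hx, hxπ⟩ := (ha.2.and ((tendsto_add_const_nhdsLT a π).eventually hb.2)).exists
  linarith [hanti x]

include harc hanti in
lemma IsDownCrossing.modEq (hper : Function.Periodic F (2 * π)) {a b : ℝ}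
    (ha : IsDownCrossing F a) (hb : IsDownCrossing F b) : a ≡ b [PMOD 2 * π] := by
  rw [AddCommGroup.modEq_iff_toIcoMod_eq_left two_pi_pos]
  have hb' : IsDownCrossing F (toIcoMod two_pi_pos a b) := by
    rw [← self_sub_toIcoDiv_zsmul, sub_eq_add_neg, ← neg_zsmul]
    exact hb.add_period (hper.zsmul _)
  have hmem := toIcoMod_mem_Ico two_pi_pos a b
  set b' := toIcoMod two_pi_pos a b
  rcases lt_trichotomy b' (a + π) with hlt | heq | hgt
  · by_contra hne
    exact not_isDownCrossing_of_lt_of_lt_add_pi harc ha (hmem.1.lt_of_ne' hne) hlt hb'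
  · exact absurd (heq ▸ hb') (not_isDownCrossing_add_pi hanti ha)
  · exact absurd (ha.add_period hper)
      (not_isDownCrossing_of_lt_of_lt_add_pi harc hb' hmem.2 (by linarith))

end ShortArcs

lemma Function.Periodic.deriv {f : ℝ → ℝ} {c : ℝ} (hf : Function.Periodic f c) :
    Function.Periodic (deriv f) c := fun x => by
  rw [← deriv_comp_add_const, funext hf]

noncomputable def involuteTangential (h : ℝ → ℝ) (θ₀ θ : ℝ) : ℝ :=
  deriv h θ₀ - ∫ τ in θ₀..θ, h τ

section InvoluteTangential

variable {h : ℝ → ℝ}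

@[simp]
lemma involuteTangential_self (θ : ℝ) : involuteTangential h θ θ = deriv h θ := by
  simp [involuteTangential]

lemma involuteTangential_add_period {c : ℝ} (hper : Function.Periodic h c) (θ₀ θ : ℝ) :
    involuteTangential h (θ₀ + c) (θ + c) = involuteTangential h θ₀ θ := by
  rw [involuteTangential, hper.deriv, ← integral_comp_add_right, funext hper, involuteTangential]

lemma involuteTangential_eq_add_integral (hsm : ContDiff ℝ 2 h) (θ₀ θ : ℝ) :
    involuteTangential h θ₀ θ =
      involuteTangential h 0 θ + ∫ τ in 0..θ₀, (h τ + deriv (deriv h) τ) := by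
  have hd : Differentiable ℝ (deriv h) := (hsm.deriv' (n := 1)).differentiable one_ne_zero
  have hc : Continuous h := hsm.continuous
  have hc₂ : Continuous (deriv (deriv h)) := (hsm.deriv' (n := 1)).continuous_deriv le_rfl
  simp only [involuteTangential]
  rw [integral_add (hc.intervalIntegrable _ _) (hc₂.intervalIntegrable _ _),
    integral_deriv_eq_sub (fun x _ => hd x) (hc₂.intervalIntegrable _ _),
    ← integral_interval_sub_left (hc.intervalIntegrable 0 θ) (hc.intervalIntegrable 0 θ₀)]
  ring

lemma strictMono_involuteTangential (hsm : ContDiff ℝ 2 h)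
    (hpos : ∀ θ, 0 < h θ + deriv (deriv h) θ) (θ : ℝ) :
    StrictMono fun θ₀ => involuteTangential h θ₀ θ := fun a b hab => by
  have hc : Continuous fun τ => h τ + deriv (deriv h) τ :=
    hsm.continuous.add ((hsm.deriv' (n := 1)).continuous_deriv le_rfl)
  dsimp only
  rw [involuteTangential_eq_add_integral hsm a θ, involuteTangential_eq_add_integral hsm b θ,
    add_lt_add_iff_left, ← sub_pos,
    integral_interval_sub_left (hc.intervalIntegrable _ _) (hc.intervalIntegrable _ _)]
  exact intervalIntegral_pos_of_pos_on (hc.intervalIntegrable _ _) (fun x _ => hpos x) hab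

lemma exists_involuteTangential_eq (hsm : ContDiff ℝ 2 h)
    (hpos : ∀ θ, 0 < h θ + deriv (deriv h) θ) (hper : Function.Periodic h (2 * π))
    {θ v : ℝ} (hv : v < deriv h θ) : ∃ θ₀ < θ, involuteTangential h θ₀ θ = v := by
  set g := fun τ => h τ + deriv (deriv h) τ
  have hc : Continuous g := hsm.continuous.add ((hsm.deriv' (n := 1)).continuous_deriv le_rfl)
  have hg : Function.Periodic g (2 * π) := hper.add hper.deriv.deriv
  have heq : (fun θ₀ => involuteTangential h θ₀ θ) =
      fun θ₀ => involuteTangential h 0 θ + ∫ τ in 0..θ₀, g τ :=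
    funext fun θ₀ => involuteTangential_eq_add_integral hsm θ₀ θ
  have hcont : Continuous fun θ₀ => involuteTangential h θ₀ θ :=
    heq ▸ continuous_const.add (continuous_primitive (fun _ _ => hc.intervalIntegrable _ _) 0)
  have hbot : Tendsto (fun θ₀ => involuteTangential h θ₀ θ) atBot atBot :=
    heq ▸ tendsto_atBot_add_const_left _ _
      (hg.tendsto_atBot_intervalIntegral_of_pos' (hc.intervalIntegrable _ _) hpos two_pi_pos)
  obtain ⟨θ₀, hθ₀, rfl⟩ := intermediate_value_Iic hcont.continuousOn hbot
    (show v ∈ Iic (involuteTangential h θ θ) by simpa using hv.le)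
  refine ⟨θ₀, hθ₀.lt_of_ne ?_, rfl⟩
  rintro rfl
  simp at hv

end InvoluteTangential

lemma continuous_supportExcess {h : ℝ → ℝ} (hc : Continuous h) (z : ℝ²) :
    Continuous (supportExcess h z) :=
  (continuous_iff_continuousAt.2 fun θ => (hasDerivAt_inner_nvec z θ).continuousAt).sub hc

lemma exists_isDownCrossing_supportExcess {K : Set ℝ²} {h : ℝ → ℝ} (hne : K.Nonempty)
    (hcv : Convex ℝ K) (hcl : IsClosed K)
    (hsupp : IsSupportFunction K h) (hc : Continuous h)
    {z : ℝ²} (hz : z ∉ K) : ∃ θ, IsDownCrossing (supportExcess h z) θ := by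
  obtain ⟨σ, hσ⟩ := hsupp.exists_lt_inner_nvec hne hcv hcl hz
  have hσ' : 0 < supportExcess h z σ := sub_pos.2 hσ
  obtain ⟨θ, -, hθ⟩ := exists_isDownCrossing_mem_Ioc (continuous_supportExcess hc z)
    (lt_add_of_pos_right σ pi_pos) hσ'
    (by linarith [supportExcess_add_supportExcess_add_pi_nonpos (z := z) hne hsupp σ])
  exact ⟨θ, hθ⟩

noncomputable def involute (h : ℝ → ℝ) (θ₀ θ : ℝ) : ℝ² :=
  h θ • nvec θ - ((∫ τ in θ₀..θ, h τ) - deriv h θ₀) • tvec θ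

section Involute

variable {K : Set ℝ²} {h : ℝ → ℝ} {z : ℝ²} {θ₀ θ : ℝ}

lemma involute_eq_iff :
    involute h θ₀ θ = z ↔ supportExcess h z θ = 0 ∧ ⟪tvec θ, z⟫ = involuteTangential h θ₀ θ := by
  rw [involute, smul_nvec_sub_smul_tvec_eq_iff, supportExcess, sub_eq_zero, involuteTangential,
    neg_sub]

lemma involute_add_zsmul (hper : Function.Periodic h (2 * π)) (m : ℤ) :
    involute h (θ₀ + m • (2 * π)) (θ + m • (2 * π)) = involute h θ₀ θ := by
  have hT := involuteTangential_add_period (hper.zsmul m) θ₀ θ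
  simp only [involuteTangential] at hT
  rw [involute, involute, hper.zsmul m θ, periodic_nvec.zsmul m θ, periodic_tvec.zsmul m θ,
    show (∫ τ in (θ₀ + m • (2 * π))..(θ + m • (2 * π)), h τ) - deriv h (θ₀ + m • (2 * π)) =
      (∫ τ in θ₀..θ, h τ) - deriv h θ₀ by linarith]

lemma isDownCrossing_of_involute_eq (hsm : ContDiff ℝ 2 h)
    (hpos : ∀ θ, 0 < h θ + deriv (deriv h) θ) (hlt : θ₀ < θ) (hz : involute h θ₀ θ = z) :
    IsDownCrossing (supportExcess h z) θ := by
  obtain ⟨h0, ht⟩ := involute_eq_iff.1 hz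
  refine isDownCrossing_of_hasDerivAt
    (hasDerivAt_supportExcess (hsm.differentiable two_ne_zero θ)) h0 ?_
  have := strictMono_involuteTangential hsm hpos θ hlt
  simp only [involuteTangential_self] at this
  linarith

lemma exists_involute_eq_of_isDownCrossing (hsm : ContDiff ℝ 2 h)
    (hpos : ∀ θ, 0 < h θ + deriv (deriv h) θ) (hper : Function.Periodic h (2 * π))
    (hθ : IsDownCrossing (supportExcess h z) θ) : ∃ θ₀ < θ, involute h θ₀ θ = z := by
  have hd₂ : Differentiable ℝ (deriv h) := (hsm.deriv' (n := 1)).differentiable one_ne_zero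
  have h0 : ⟪nvec θ, z⟫ - h θ = 0 := hθ.1
  have hneg := hθ.deriv_neg (fun x => hasDerivAt_supportExcess (hsm.differentiable two_ne_zero x))
    (hasDerivAt_inner_tvec_sub_deriv (hd₂ θ)) (by linarith [hpos θ])
  obtain ⟨θ₀, hlt, heq⟩ := exists_involuteTangential_eq hsm hpos hper (sub_neg.1 hneg)
  exact ⟨θ₀, hlt, involute_eq_iff.2 ⟨hθ.1, heq.symm⟩⟩

lemma exists_zsmul_of_involute_eq (hne : K.Nonempty)
    (hsupp : IsSupportFunction K h) (hsm : ContDiff ℝ 2 h)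
    (hpos : ∀ θ, 0 < h θ + deriv (deriv h) θ) {θ₀' θ' : ℝ} (hlt : θ₀ < θ) (hlt' : θ₀' < θ')
    (hz : involute h θ₀ θ = z) (hz' : involute h θ₀' θ' = z) :
    ∃ m : ℤ, θ₀' = θ₀ + m • (2 * π) ∧ θ' = θ + m • (2 * π) := by
  have hper := hsupp.periodic
  have hperF : Function.Periodic (supportExcess h z) (2 * π) := fun θ => by
    simp only [supportExcess, periodic_nvec θ, hper θ]
  obtain ⟨m, hm⟩ := AddCommGroup.modEq_iff_zsmul'.1 <|
    (isDownCrossing_of_involute_eq hsm hpos hlt hz).modEq (supportExcess_pos_of_mem_Ioo hsupp)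
      (supportExcess_add_supportExcess_add_pi_nonpos hne hsupp) hperF
      (isDownCrossing_of_involute_eq hsm hpos hlt' hz')
  have hθ' : θ' = θ + m • (2 * π) := by linarith
  have hshift : involute h (θ₀ + m • (2 * π)) θ' = z := by
    rw [hθ', involute_add_zsmul hper, hz]
  refine ⟨m, (strictMono_involuteTangential hsm hpos θ').injective ?_, hθ'⟩
  exact (involute_eq_iff.1 hz').2.symm.trans (involute_eq_iff.1 hshift).2

end Involute

/-- The family of left involutes of `∂K`, parameterized by the starting
normal angle `ϑ₀ ∈ [0, 2π)` and the angle `ϑ > ϑ₀`, covers `ℝ² \ K` bijectively: every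
`z ∉ K` is `I(ϑ₀, ϑ)` for exactly one such pair. -/
theorem stmt_14 (K : Set (EuclideanSpace ℝ (Fin 2)))
    (hne : K.Nonempty) (hcp : IsCompact K) (hcv : Convex ℝ K)
    (h : ℝ → ℝ)
    (hsupp : ∀ θ : ℝ, IsLUB ((fun y => (inner ℝ (nvec θ) y : ℝ)) '' K) (h θ))
    (hsm : ContDiff ℝ 2 h) (hpos : ∀ θ, 0 < h θ + deriv (deriv h) θ)
    (I : ℝ → ℝ → EuclideanSpace ℝ (Fin 2))
    (hI : ∀ θ₀ θ, I θ₀ θ =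
      h θ • nvec θ - ((∫ τ in θ₀..θ, h τ) - deriv h θ₀) • tvec θ) :
    ∀ z : EuclideanSpace ℝ (Fin 2), z ∉ K →
      ∃! p : ℝ × ℝ, p.1 ∈ Set.Ico 0 (2 * Real.pi) ∧ p.1 < p.2 ∧ I p.1 p.2 = z := by
  intro z hz
  obtain rfl : I = involute h := funext fun θ₀ => funext (hI θ₀)
  have hper := IsSupportFunction.periodic hsupp
  obtain ⟨θ, hθ⟩ :=
    exists_isDownCrossing_supportExcess hne hcv hcp.isClosed hsupp hsm.continuous hz
  obtain ⟨θ₀, hlt, hθ₀⟩ := exists_involute_eq_of_isDownCrossing hsm hpos hper hθ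
  obtain ⟨m, hm, hm_unique⟩ := existsUnique_add_zsmul_mem_Ico two_pi_pos θ₀ 0
  rw [zero_add] at hm
  have hθ₀m := (involute_add_zsmul hper m).trans hθ₀
  have hltm : θ₀ + m • (2 * π) < θ + m • (2 * π) := add_lt_add_left hlt _
  refine ⟨(θ₀ + m • (2 * π), θ + m • (2 * π)), ⟨hm, hltm, hθ₀m⟩, ?_⟩
  rintro ⟨θ₀', θ'⟩ ⟨hmem, hlt', hz'⟩
  dsimp only at hmem hlt' hz'
  obtain ⟨n, rfl, rfl⟩ := exists_zsmul_of_involute_eq hne hsupp hsm hpos hltm hlt' hθ₀m hz'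
  have hn : m + n = m := hm_unique _ (by simpa only [zero_add, add_zsmul, add_assoc] using hmem)
  simp [show n = 0 by omega]
end

section
/- Let $2\sqrt{2} < \rho < \pi$ and set $\xi_1 = (0,0)$, $\xi_2 = (0,2)$, $\xi_3 = (2,0)$, $\xi_4 = (\rho, 2)$ in $\mathbb{R}^2$. Then: (a) the ordered set $\{\xi_1, \xi_2, \xi_3, \xi_4\}$ is a self-distancing set, i.e. $\|\xi_j - \xi_i\| \le \|\xi_k - \xi_i\|$ whenever $i \le j \le k$; (b) there is no continuous map $\gamma : [0,1] \to \mathbb{R}^2$ satisfying the self-distancing property and admitting parameters $0 \le t_1 \le t_2 \le t_3 \le t_4 \le 1$ with $\gamma(t_m) = \xi_m$ for $m = 1, 2, 3, 4$. Hence this self-distancing set is not SDC-extendible. -/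
/-!
Since `ξ₂` and `ξ₃` are both at distance 2 from `ξ₁`, the curve runs between them along the
quarter circle of radius 2 about `ξ₁`, and afterwards it must cross every tangent line of that
quarter circle before reaching `ξ₄`. Let `l θ` be the position, measured along the tangent at
angle `θ`, at which the curve first meets it. Distancing from the arc point at angle `θ` forces
`l (θ + δ) ≥ l θ + 2 (sin δ + cos δ - 1)`, so `l (π / 2) ≥ n · 2 (sin δ + cos δ - 1)` for
`δ = π / (2 n)`, and this tends to the length `π` of the quarter circle. Distancing from `ξ₂`
gives `l (π / 2) ≤ ‖ξ₄ - ξ₂‖ = ρ`; hence `π ≤ ρ`.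
-/

open Real Set Filter Topology

@[simp] lemma vec2_apply_zero (a b : ℝ) : vec2 a b 0 = a := rfl

@[simp] lemma vec2_apply_one (a b : ℝ) : vec2 a b 1 = b := rfl

lemma norm_sub_sq_fin_two (p q : EuclideanSpace ℝ (Fin 2)) :
    ‖p - q‖ ^ 2 = (p 0 - q 0) ^ 2 + (p 1 - q 1) ^ 2 := by
  simp [EuclideanSpace.real_norm_sq_eq, Fin.sum_univ_two]

def IsSelfDistancing {ι E : Type*} [Preorder ι] [SeminormedAddCommGroup E] (σ : ι → E) : Prop :=
  ∀ i j k, i ≤ j → j ≤ k → ‖σ j - σ i‖ ≤ ‖σ k - σ i‖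

def IsSelfDistancingOn {E : Type*} [SeminormedAddCommGroup E] (γ : ℝ → E) (s : Set ℝ) : Prop :=
  ∀ t₁ ∈ s, ∀ t₂ ∈ s, ∀ t₃ ∈ s, t₁ ≤ t₂ → t₂ ≤ t₃ → ‖γ t₂ - γ t₁‖ ≤ ‖γ t₃ - γ t₁‖

namespace IsSelfDistancingOn

variable {E : Type*} [SeminormedAddCommGroup E] {γ : ℝ → E}

lemma mono {s t : Set ℝ} (h : IsSelfDistancingOn γ s) (hts : t ⊆ s) : IsSelfDistancingOn γ t :=
  fun t₁ h₁ t₂ h₂ t₃ h₃ => h t₁ (hts h₁) t₂ (hts h₂) t₃ (hts h₃)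

lemma norm_sub_le {a d t₁ t₂ t₃ : ℝ} (h : IsSelfDistancingOn γ (Icc a d)) (h₁ : a ≤ t₁)
    (h₁₂ : t₁ ≤ t₂) (h₂₃ : t₂ ≤ t₃) (h₃ : t₃ ≤ d) : ‖γ t₂ - γ t₁‖ ≤ ‖γ t₃ - γ t₁‖ :=
  h t₁ ⟨h₁, by linarith⟩ t₂ ⟨by linarith, by linarith⟩ t₃ ⟨by linarith, h₃⟩ h₁₂ h₂₃

lemma norm_sub_eq {a b c d t : ℝ} (h : IsSelfDistancingOn γ (Icc a d)) (hab : a ≤ b)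
    (hbt : b ≤ t) (htc : t ≤ c) (hcd : c ≤ d) (hbc : ‖γ b - γ a‖ = ‖γ c - γ a‖) :
    ‖γ t - γ a‖ = ‖γ b - γ a‖ :=
  le_antisymm (hbc ▸ h.norm_sub_le le_rfl (hab.trans hbt) htc hcd)
    (h.norm_sub_le le_rfl hab hbt (htc.trans hcd))

end IsSelfDistancingOn

/-- The point at signed distance `l` from the point of contact, along the tangent at angle `θ`
to the circle of radius 2 about the origin; that tangent is the line `radial θ p = 2`. -/
noncomputable def tangentPoint (θ l : ℝ) : EuclideanSpace ℝ (Fin 2) :=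
  vec2 (2 * cos θ + l * sin θ) (2 * sin θ - l * cos θ)

noncomputable def radial (θ : ℝ) (p : EuclideanSpace ℝ (Fin 2)) : ℝ :=
  p 0 * cos θ + p 1 * sin θ

lemma tangentPoint_pi_div_two (l : ℝ) : tangentPoint (π / 2) l = vec2 l 2 := by
  simp [tangentPoint]

lemma tangentPoint_zero_zero : tangentPoint 0 0 = vec2 2 0 := by
  simp [tangentPoint]

lemma norm_tangentPoint_sub_sq (θ φ l : ℝ) :
    ‖tangentPoint θ l - tangentPoint φ 0‖ ^ 2 =
      l ^ 2 - 4 * l * sin (θ - φ) + 8 * (1 - cos (θ - φ)) := by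
  rw [norm_sub_sq_fin_two, sin_sub, cos_sub]
  simp only [tangentPoint, vec2_apply_zero, vec2_apply_one]
  linear_combination (4 + l ^ 2) * sin_sq_add_cos_sq θ + 4 * sin_sq_add_cos_sq φ

lemma radial_tangentPoint (θ φ l : ℝ) :
    radial φ (tangentPoint θ l) = 2 * cos (θ - φ) + l * sin (θ - φ) := by
  simp only [radial, tangentPoint, vec2_apply_zero, vec2_apply_one, sin_sub, cos_sub]
  ring

lemma exists_eq_tangentPoint_of_radial_eq {θ : ℝ} {p : EuclideanSpace ℝ (Fin 2)}
    (h : radial θ p = 2) : ∃ l, p = tangentPoint θ l := by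
  refine ⟨p 0 * sin θ - p 1 * cos θ, PiLp.ext fun i => ?_⟩
  unfold radial at h
  fin_cases i
  · simp only [tangentPoint, Fin.zero_eta, vec2_apply_zero]
    linear_combination cos θ * h - p 0 * sin_sq_add_cos_sq θ
  · simp only [tangentPoint, Fin.mk_one, vec2_apply_one]
    linear_combination sin θ * h - p 1 * sin_sq_add_cos_sq θ

lemma exists_first_eq_of_continuousOn {f : ℝ → ℝ} {c d y : ℝ} (hcd : c ≤ d)
    (hf : ContinuousOn f (Icc c d)) (hc : f c ≤ y) (hd : y ≤ f d) :
    ∃ u ∈ Icc c d, f u = y ∧ ∀ v ∈ Icc c d, y ≤ f v → u ≤ v := by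
  set S := Icc c d ∩ f ⁻¹' {y}
  have hS : IsCompact S := isCompact_Icc.of_isClosed_subset
    (hf.preimage_isClosed_of_isClosed isClosed_Icc isClosed_singleton) inter_subset_left
  obtain ⟨x, hx, hfx⟩ := intermediate_value_Icc hcd hf ⟨hc, hd⟩
  obtain ⟨u, ⟨hu, hfu⟩, hleast⟩ := hS.exists_isLeast ⟨x, hx, hfx⟩
  refine ⟨u, hu, hfu, fun v hv hyv => ?_⟩
  obtain ⟨w, hw, hfw⟩ :=
    intermediate_value_Icc hv.1 (hf.mono (Icc_subset_Icc_right hv.2)) ⟨hc, hyv⟩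
  exact (hleast ⟨⟨hw.1, hw.2.trans hv.2⟩, hfw⟩).trans hw.2

noncomputable def gain (δ : ℝ) : ℝ := 2 * (sin δ + cos δ - 1)

lemma tendsto_nat_mul_gain : Tendsto (fun n : ℕ => n * gain (π / 2 / n)) atTop (𝓝 π) := by
  have hd : HasDerivAt gain 2 0 := by
    unfold gain
    simpa using (((hasDerivAt_sin 0).add (hasDerivAt_cos 0)).sub_const 1).const_mul 2
  have hδ : Tendsto (fun n : ℕ => π / 2 / n) atTop (𝓝[≠] 0) :=
    tendsto_nhdsWithin_iff.2 ⟨tendsto_const_div_atTop_nhds_zero_nat _,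
      eventually_atTop.2 ⟨1, fun n hn => div_ne_zero (by positivity) (by positivity)⟩⟩
  have := (hd.tendsto_slope_zero.comp hδ).const_mul (π / 2)
  rw [show π / 2 * 2 = π by ring] at this
  refine this.congr' (eventually_atTop.2 ⟨1, fun n hn => ?_⟩)
  have : (n : ℝ) ≠ 0 := by positivity
  simp [gain]
  field_simp

lemma pos_of_tangent_constraints {l s c ρ : ℝ} (hs : 0 < s) (hρ : (ρ - 2) ^ 2 < 3)
    (hinner : 8 * s ≤ l ^ 2 + 4 * l * c)
    (houter : l ^ 2 - 4 * l * s + 8 * (1 - c) ≤ (ρ - 2) ^ 2 + 4) : 0 < l := by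
  by_contra! hl
  have hlc : 4 * c ≤ -l := by nlinarith
  nlinarith [mul_nonneg (neg_nonneg.2 hl) hs.le, sq_nonneg (l + 1)]

lemma two_mul_one_sub_cos_le_mul_sin {δ l : ℝ} (hs : 0 ≤ sin δ) (hc : 0 ≤ cos δ) (hl : 0 ≤ l)
    (h : 8 * (1 - cos δ) ≤ l ^ 2) : 2 * (1 - cos δ) ≤ l * sin δ := by
  refine le_of_sq_le_sq ?_ (mul_nonneg hl hs)
  nlinarith [sin_sq_add_cos_sq δ, mul_le_mul_of_nonneg_right h (sq_nonneg (sin δ)),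
    mul_nonneg (sq_nonneg (1 - cos δ)) hc]

lemma gain_le_of_sq_le {δ l : ℝ} (hs : 0 ≤ sin δ) (hl : 0 ≤ l) (h : 8 * (1 - cos δ) ≤ l ^ 2) :
    gain δ ≤ l := by
  refine le_of_sq_le_sq ?_ hl
  unfold gain
  nlinarith [sin_sq_add_cos_sq δ, mul_nonneg (sub_nonneg.2 (cos_le_one δ)) hs]

lemma add_gain_le_of_sq_le {δ a b : ℝ} (ha : 0 ≤ a) (hb : 0 ≤ b)
    (ha' : 8 * (1 - cos δ) ≤ a ^ 2) (hb' : 8 * (1 - cos δ) ≤ b ^ 2)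
    (h : b ^ 2 ≤ a ^ 2 - 4 * a * sin δ + 8 * (1 - cos δ)) : b + gain δ ≤ a := by
  have hpy := sin_sq_add_cos_sq δ
  have hc := cos_le_one δ
  have ha2 : 2 * sin δ ≤ a := le_of_sq_le_sq (by nlinarith) ha
  have hb2 : 2 * (1 - cos δ) ≤ b := le_of_sq_le_sq (by nlinarith) hb
  unfold gain
  by_contra! hlt
  -- `x ↦ x ^ 2 - 4 x sin δ` is increasing on `x ≥ 2 sin δ`, and at `x = b + gain δ` it is
  -- already at most `b ^ 2 - 8 (1 - cos δ)`.
  rcases (show 0 ≤ a + b + 2 * (cos δ - 1) - 2 * sin δ by linarith).eq_or_lt with heq | hpos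
  · linarith
  · nlinarith [mul_pos (sub_pos.2 hlt) (sub_pos.2 hpos),
      mul_nonneg (sub_nonneg.2 hc) (sub_nonneg.2 hb2)]

structure IsSDCThrough (γ : ℝ → EuclideanSpace ℝ (Fin 2)) (ρ a b c d : ℝ) : Prop where
  continuousOn : ContinuousOn γ (Icc a d)
  selfDistancing : IsSelfDistancingOn γ (Icc a d)
  a_le_b : a ≤ b
  b_le_c : b ≤ c
  c_le_d : c ≤ d
  apply_a : γ a = vec2 0 0
  apply_b : γ b = vec2 0 2
  apply_c : γ c = vec2 2 0
  apply_d : γ d = vec2 ρ 2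

namespace IsSDCThrough

variable {γ : ℝ → EuclideanSpace ℝ (Fin 2)} {ρ a b c d : ℝ}

lemma apply_b_eq_tangentPoint (h : IsSDCThrough γ ρ a b c d) :
    γ b = tangentPoint (π / 2) 0 := by
  rw [h.apply_b, tangentPoint_pi_div_two]

lemma apply_c_eq_tangentPoint (h : IsSDCThrough γ ρ a b c d) : γ c = tangentPoint 0 0 := by
  rw [h.apply_c, tangentPoint_zero_zero]

lemma apply_d_eq_tangentPoint (h : IsSDCThrough γ ρ a b c d) :
    γ d = tangentPoint (π / 2) ρ := by
  rw [h.apply_d, tangentPoint_pi_div_two]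

lemma exists_eq_tangentPoint_zero (h : IsSDCThrough γ ρ a b c d) {θ : ℝ}
    (hθ : θ ∈ Icc 0 (π / 2)) : ∃ s ∈ Icc b c, γ s = tangentPoint θ 0 := by
  have hcirc : ∀ s ∈ Icc b c, γ s 0 ^ 2 + γ s 1 ^ 2 = 4 ∧ 0 ≤ γ s 1 := by
    intro s hs
    have hr := h.selfDistancing.norm_sub_eq h.a_le_b hs.1 hs.2 h.c_le_d (by
      rw [← sq_eq_sq₀ (norm_nonneg _) (norm_nonneg _), norm_sub_sq_fin_two,
        norm_sub_sq_fin_two, h.apply_a, h.apply_b, h.apply_c]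
      norm_num)
    have hb := h.selfDistancing.norm_sub_le h.a_le_b hs.1 hs.2 h.c_le_d
    have hr2 := congrArg (· ^ 2) hr
    have hb2 := pow_le_pow_left₀ (norm_nonneg _) hb 2
    simp only [norm_sub_sq_fin_two, h.apply_a, h.apply_b, h.apply_c, vec2_apply_zero,
      vec2_apply_one] at hr2 hb2
    constructor <;> nlinarith
  have hcos : 2 * cos θ ∈ Icc (γ b 0) (γ c 0) := by
    rw [h.apply_b, h.apply_c]
    have := cos_nonneg_of_mem_Icc ⟨by linarith [hθ.1, pi_pos], hθ.2⟩
    exact ⟨by simpa using this, by simpa using cos_le_one θ⟩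
  have hX : ContinuousOn (fun s => γ s 0) (Icc b c) :=
    (EuclideanSpace.proj (0 : Fin 2)).continuous.comp_continuousOn
      (h.continuousOn.mono (Icc_subset_Icc h.a_le_b h.c_le_d))
  obtain ⟨s, hs, hx⟩ := intermediate_value_Icc h.b_le_c hX hcos
  obtain ⟨hr, hy⟩ := hcirc s hs
  have hsin := sin_nonneg_of_nonneg_of_le_pi hθ.1 (by linarith [hθ.2, pi_pos])
  have hy' : γ s 1 = 2 * sin θ := by
    have : γ s 1 ^ 2 = (2 * sin θ) ^ 2 := by
      simp only at hx
      rw [hx] at hr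
      linear_combination hr - 4 * sin_sq_add_cos_sq θ
    exact (sq_eq_sq₀ hy (by positivity)).1 this
  refine ⟨s, hs, PiLp.ext fun i => ?_⟩
  fin_cases i
  · simpa [tangentPoint] using hx
  · simpa [tangentPoint] using hy'

lemma exists_first_tangent_hit (h : IsSDCThrough γ ρ a b c d) (hρ : 2 ≤ ρ) :
    ∀ θ ∈ Icc 0 (π / 2), ∃ u ∈ Icc c d, ∃ l, γ u = tangentPoint θ l ∧
      ∀ v ∈ Icc c d, 2 ≤ radial θ (γ v) → u ≤ v := by
  intro θ hθ
  have hf : ContinuousOn (fun v => radial θ (γ v)) (Icc c d) :=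
    (show Continuous (radial θ) by unfold radial; fun_prop).comp_continuousOn
      (h.continuousOn.mono (Icc_subset_Icc (h.a_le_b.trans h.b_le_c) le_rfl))
  have hsin := sin_nonneg_of_nonneg_of_le_pi hθ.1 (by linarith [hθ.2, pi_pos])
  have hcos := cos_nonneg_of_mem_Icc ⟨by linarith [hθ.1, pi_pos], hθ.2⟩
  have hc : radial θ (γ c) ≤ 2 := by
    simp [h.apply_c_eq_tangentPoint, radial_tangentPoint, cos_le_one]
  have hd : 2 ≤ radial θ (γ d) := by
    rw [h.apply_d_eq_tangentPoint, radial_tangentPoint, cos_pi_div_two_sub, sin_pi_div_two_sub]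
    nlinarith [sin_sq_add_cos_sq θ, mul_nonneg hsin hcos]
  obtain ⟨u, hu, hfu, hfirst⟩ := exists_first_eq_of_continuousOn h.c_le_d hf hc hd
  obtain ⟨l, hl⟩ := exists_eq_tangentPoint_of_radial_eq hfu
  exact ⟨u, hu, l, hl, hfirst⟩

lemma lateral_bounds (h : IsSDCThrough γ ρ a b c d) (hρ : (ρ - 2) ^ 2 < 3) {θ l u : ℝ}
    (hθ : θ ∈ Ioc 0 (π / 2)) (hu : u ∈ Icc c d) (hl : γ u = tangentPoint θ l) :
    0 < l ∧ 8 * (1 - cos θ) ≤ l ^ 2 := by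
  obtain ⟨s, hs, hγs⟩ := h.exists_eq_tangentPoint_zero (Ioc_subset_Icc_self hθ)
  have hcard := pow_le_pow_left₀ (norm_nonneg _)
    (h.selfDistancing.norm_sub_le (h.a_le_b.trans hs.1) hs.2 hu.1 hu.2) 2
  have hinner := pow_le_pow_left₀ (norm_nonneg _)
    (h.selfDistancing.norm_sub_le h.a_le_b h.b_le_c hu.1 hu.2) 2
  have houter := pow_le_pow_left₀ (norm_nonneg _)
    (h.selfDistancing.norm_sub_le (h.a_le_b.trans h.b_le_c) hu.1 hu.2 le_rfl) 2
  rw [hγs, h.apply_c_eq_tangentPoint, hl, norm_sub_rev, norm_tangentPoint_sub_sq,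
    norm_tangentPoint_sub_sq] at hcard
  rw [h.apply_b_eq_tangentPoint, h.apply_c_eq_tangentPoint, hl, norm_tangentPoint_sub_sq,
    norm_tangentPoint_sub_sq] at hinner
  rw [h.apply_c_eq_tangentPoint, h.apply_d_eq_tangentPoint, hl, norm_tangentPoint_sub_sq,
    norm_tangentPoint_sub_sq] at houter
  simp only [sub_self, sub_zero, zero_sub, sin_zero, cos_zero, cos_neg, sin_sub_pi_div_two,
    cos_sub_pi_div_two, sin_pi_div_two, cos_pi_div_two] at hcard hinner houter
  have hsin := sin_pos_of_pos_of_lt_pi hθ.1 (by linarith [hθ.2, pi_pos])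
  exact ⟨pos_of_tangent_constraints (c := cos θ) hsin hρ (by linarith) (by linarith),
    by linarith⟩

lemma lateral_add_gain_le (h : IsSDCThrough γ ρ a b c d) (hρ : (ρ - 2) ^ 2 < 3)
    {θ δ l l' u u' : ℝ} (hδ : 0 < δ) (hδθ : δ ≤ θ) (hθδ : θ + δ ≤ π / 2)
    (hu : u ∈ Icc c d) (hl : γ u = tangentPoint θ l)
    (hfirst : ∀ v ∈ Icc c d, 2 ≤ radial θ (γ v) → u ≤ v)
    (hu' : u' ∈ Icc c d) (hl' : γ u' = tangentPoint (θ + δ) l') : l + gain δ ≤ l' := by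
  have hθ : θ ∈ Ioc 0 (π / 2) := ⟨by linarith, by linarith⟩
  obtain ⟨hl0, hl2⟩ := h.lateral_bounds hρ hθ hu hl
  obtain ⟨hl0', hl2'⟩ := h.lateral_bounds hρ ⟨by linarith, hθδ⟩ hu' hl'
  have hsin : 0 < sin δ := sin_pos_of_pos_of_lt_pi hδ (by linarith [pi_pos])
  have hcos : 0 ≤ cos δ := cos_nonneg_of_mem_Icc ⟨by linarith [pi_pos], by linarith⟩
  have hcosθ : cos θ ≤ cos δ := cos_le_cos_of_nonneg_of_le_pi hδ.le (by linarith [pi_pos]) hδθ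
  have hcosθ' : cos (θ + δ) ≤ cos δ :=
    cos_le_cos_of_nonneg_of_le_pi hδ.le (by linarith [pi_pos]) (by linarith)
  have huu' : u ≤ u' := hfirst u' hu' (by
    rw [hl', radial_tangentPoint, add_sub_cancel_left]
    linarith [two_mul_one_sub_cos_le_mul_sin hsin.le hcos hl0'.le (by linarith)])
  obtain ⟨s, hs, hγs⟩ := h.exists_eq_tangentPoint_zero (Ioc_subset_Icc_self hθ)
  have hsd := pow_le_pow_left₀ (norm_nonneg _) (h.selfDistancing.norm_sub_le
    (h.a_le_b.trans hs.1) (hs.2.trans hu.1) huu' hu'.2) 2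
  rw [hγs, hl, hl', norm_tangentPoint_sub_sq, norm_tangentPoint_sub_sq,
    add_sub_cancel_left] at hsd
  simp only [sub_self, sin_zero, cos_zero] at hsd
  exact add_gain_le_of_sq_le hl0'.le hl0.le (by linarith) (by linarith) (by linarith)

lemma lateral_le (h : IsSDCThrough γ ρ a b c d) (hρ : 0 ≤ ρ) {l u : ℝ} (hu : u ∈ Icc c d)
    (hl : γ u = tangentPoint (π / 2) l) : l ≤ ρ := by
  have hsd := pow_le_pow_left₀ (norm_nonneg _) (h.selfDistancing.norm_sub_le
    h.a_le_b (h.b_le_c.trans hu.1) hu.2 le_rfl) 2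
  rw [h.apply_b_eq_tangentPoint, hl, h.apply_d_eq_tangentPoint, norm_tangentPoint_sub_sq,
    norm_tangentPoint_sub_sq] at hsd
  simp only [sub_self, sin_zero, cos_zero] at hsd
  exact le_of_sq_le_sq (by linarith) hρ

theorem pi_le (h : IsSDCThrough γ ρ a b c d) (hρ : 2 ≤ ρ) (hρ3 : (ρ - 2) ^ 2 < 3) : π ≤ ρ := by
  choose! u hu l hl hfirst using h.exists_first_tangent_hit hρ
  refine le_of_tendsto tendsto_nat_mul_gain (eventually_atTop.2 ⟨1, fun N hN => ?_⟩)
  set δ := π / 2 / N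
  have hδ : 0 < δ := by positivity
  have hNδ : N * δ = π / 2 := by simp only [δ]; field_simp
  have hkδ (k : ℕ) (hk : k ≤ N) : k * δ ∈ Icc 0 (π / 2) :=
    ⟨by positivity, hNδ ▸ mul_le_mul_of_nonneg_right (by exact_mod_cast hk) hδ.le⟩
  have hchain (k : ℕ) (hk : 1 ≤ k) : k ≤ N → k * gain δ ≤ l (k * δ) := by
    induction k, hk using Nat.le_induction with
    | base =>
      intro h1N
      have hδ' := hkδ 1 h1N
      simp only [Nat.cast_one, one_mul] at hδ' ⊢
      obtain ⟨hl0, hl2⟩ := h.lateral_bounds hρ3 ⟨hδ, hδ'.2⟩ (hu _ hδ') (hl _ hδ')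
      exact gain_le_of_sq_le (sin_nonneg_of_nonneg_of_le_pi hδ.le (by linarith [pi_pos, hδ'.2]))
        hl0.le hl2
    | succ k hk ih =>
      intro hkN
      have hk' := hkδ k (by omega)
      have hk1 := hkδ (k + 1) hkN
      push_cast at hk1 ⊢
      simp only [add_mul, one_mul] at hk1 ⊢
      have := h.lateral_add_gain_le hρ3 hδ (le_mul_of_one_le_left hδ.le (by exact_mod_cast hk))
        hk1.2 (hu _ hk') (hl _ hk') (hfirst _ hk') (hu _ hk1) (hl _ hk1)
      linarith [ih (by omega)]
  have hπ2 : π / 2 ∈ Icc 0 (π / 2) := ⟨by positivity, le_rfl⟩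
  calc (N : ℝ) * gain δ ≤ l (N * δ) := hchain N hN le_rfl
    _ = l (π / 2) := by rw [hNδ]
    _ ≤ ρ := h.lateral_le (by linarith) (hu _ hπ2) (hl _ hπ2)

end IsSDCThrough

lemma isSelfDistancing_vec2 {ρ : ℝ} (hρ : 2 * √2 < ρ) :
    IsSelfDistancing ![vec2 0 0, vec2 0 2, vec2 2 0, vec2 ρ 2] := by
  have h8 : 8 < ρ ^ 2 := by nlinarith [sq_sqrt (show (0 : ℝ) ≤ 2 by norm_num), sqrt_nonneg 2]
  intro i j k hij hjk
  rw [← sq_le_sq₀ (norm_nonneg _) (norm_nonneg _), norm_sub_sq_fin_two, norm_sub_sq_fin_two]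
  fin_cases i <;> fin_cases j <;> fin_cases k <;> simp at hij hjk ⊢ <;> nlinarith

/-- Example `si^4+`. For `2√2 < ρ < π`, the four ordered points
`ξ₁ = (0,0)`, `ξ₂ = (0,2)`, `ξ₃ = (2,0)`, `ξ₄ = (ρ,2)` form a self-distancing set, but
there is no continuous self-distancing curve on `[0,1]` passing through them in this
order: the set is not SDC-extendible. -/
theorem stmt_16 (ρ : ℝ) (hρ₁ : 2 * Real.sqrt 2 < ρ) (hρ₂ : ρ < Real.pi)
    (ξ : Fin 4 → EuclideanSpace ℝ (Fin 2))
    (hξ : ξ = ![vec2 0 0, vec2 0 2, vec2 2 0, vec2 ρ 2]) :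
    (∀ i j k : Fin 4, i ≤ j → j ≤ k → ‖ξ j - ξ i‖ ≤ ‖ξ k - ξ i‖) ∧
    ¬ ∃ (γ : ℝ → EuclideanSpace ℝ (Fin 2)) (t : Fin 4 → ℝ),
        ContinuousOn γ (Set.Icc 0 1) ∧
        (∀ t₁ ∈ Set.Icc (0:ℝ) 1, ∀ t₂ ∈ Set.Icc (0:ℝ) 1, ∀ t₃ ∈ Set.Icc (0:ℝ) 1,
          t₁ ≤ t₂ → t₂ ≤ t₃ → ‖γ t₂ - γ t₁‖ ≤ ‖γ t₃ - γ t₁‖) ∧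
        (∀ m, t m ∈ Set.Icc (0:ℝ) 1) ∧ Monotone t ∧ (∀ m, γ (t m) = ξ m) := by
  subst hξ
  refine ⟨isSelfDistancing_vec2 hρ₁, ?_⟩
  rintro ⟨γ, t, hγ, hsd, ht, hmono, hpass⟩
  have hsub : Icc (t 0) (t 3) ⊆ Icc 0 1 := Icc_subset_Icc (ht 0).1 (ht 3).2
  have h : IsSDCThrough γ ρ (t 0) (t 1) (t 2) (t 3) :=
    { continuousOn := hγ.mono hsub
      selfDistancing := IsSelfDistancingOn.mono hsd hsub
      a_le_b := hmono (by decide)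
      b_le_c := hmono (by decide)
      c_le_d := hmono (by decide)
      apply_a := hpass 0
      apply_b := hpass 1
      apply_c := hpass 2
      apply_d := hpass 3 }
  have hρ : 2 ≤ ρ := by nlinarith [sq_sqrt (show (0 : ℝ) ≤ 2 by norm_num), sqrt_nonneg 2]
  exact hρ₂.not_ge (h.pi_le hρ (by nlinarith [pi_lt_d2]))
end

section
/- Let $\gamma : [0,1] \to \mathbb{R}^2$ be a Lipschitz self-distancing curve and let $x_1 \in \mathbb{R}^2$. Then the following are equivalent: (i) $\langle \gamma'(t), x_1 - \gamma(t) \rangle \le 0$ for almost every $t \in [0,1]$ (i.e. $x_1$ belongs to the region $\mathfrak{H}(\gamma)$ cut out by all half-planes bounded by the normal lines of $\gamma$); (ii) there exists a Lipschitz self-distancing curve $\delta : [-1,1] \to \mathbb{R}^2$ with $\delta(-1) = x_1$ and $\delta(t) = \gamma(t)$ for $t \in [0,1]$. Moreover, when (i) holds, one may take $\delta(t) = x_1 + (1+t)(\gamma(0) - x_1)$ for $t \in [-1,0]$ and $\delta(t) = \gamma(t)$ for $t \in [0,1]$, i.e. $\gamma$ preceded by the straight segment from $x_1$ to $\gamma(0)$.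 -/
/-!
Since `γ` is Lipschitz, `t ↦ ‖γ t - x₁‖²` is absolutely continuous with derivative
`-2⟪γ'(t), x₁ - γ(t)⟫` almost everywhere, so condition (i) says exactly that `t ↦ ‖γ t - x₁‖` is
monotone on `[0,1]`; condition (ii) forces this monotonicity by taking `t₁ = -1`.
Conversely, `{z | ‖a - z‖ ≤ ‖b - z‖}` is a half-space, so monotonicity of the distances along `γ`
from `x₁` and from `γ 0` passes to the distances from every point of the segment `[x₁, γ 0]`;
this is what makes the segment followed by `γ` self-distancing.
-/

open MeasureTheory Set

/-- `γ` is self-distancing on `s`: distances from earlier points never decrease. -/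
def SelfDistOn (γ : ℝ → EuclideanSpace ℝ (Fin 2)) (s : Set ℝ) : Prop :=
  ∀ t₁ ∈ s, ∀ t₂ ∈ s, ∀ t₃ ∈ s, t₁ ≤ t₂ → t₂ ≤ t₃ → ‖γ t₂ - γ t₁‖ ≤ ‖γ t₃ - γ t₁‖

open AffineMap RealInnerProductSpace

theorem monotoneOn_norm_iff_monotoneOn_norm_sq {α E : Type*} [Preorder α] [SeminormedAddGroup E]
    {f : α → E} {s : Set α} :
    MonotoneOn (fun t => ‖f t‖) s ↔ MonotoneOn (fun t => ‖f t‖ ^ 2) s := by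
  simp only [MonotoneOn, sq_le_sq₀ (norm_nonneg _) (norm_nonneg _)]

theorem AbsolutelyContinuousOnInterval.monotoneOn_of_ae_deriv_nonneg {f : ℝ → ℝ} {a b : ℝ}
    (hf : AbsolutelyContinuousOnInterval f a b)
    (hd : ∀ᵐ t ∂volume.restrict (Icc a b), 0 ≤ deriv f t) : MonotoneOn f (Icc a b) := by
  intro s hs t ht hst
  have hsub : Icc s t ⊆ Icc a b := Icc_subset_Icc hs.1 ht.2
  have hsub' : uIcc s t ⊆ uIcc a b := by
    rwa [uIcc_of_le hst, uIcc_of_le (hs.1.trans hs.2)]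
  rw [← sub_nonneg, ← (hf.mono hsub').integral_deriv_eq_sub]
  exact intervalIntegral.integral_nonneg_of_ae_restrict hst
    (ae_restrict_of_ae_restrict_of_subset hsub hd)

section InnerProductSpace

variable {E : Type*} [NormedAddCommGroup E] [InnerProductSpace ℝ E]

theorem convex_setOf_norm_sub_le_norm_sub (a b : E) : Convex ℝ {z | ‖a - z‖ ≤ ‖b - z‖} := by
  have hset : {z | ‖a - z‖ ≤ ‖b - z‖} = {z | ⟪b - a, z⟫ ≤ (‖b‖ ^ 2 - ‖a‖ ^ 2) / 2} := by
    ext z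
    change ‖a - z‖ ≤ ‖b - z‖ ↔ ⟪b - a, z⟫ ≤ (‖b‖ ^ 2 - ‖a‖ ^ 2) / 2
    rw [← sq_le_sq₀ (norm_nonneg _) (norm_nonneg _),
      norm_sub_sq_real, norm_sub_sq_real, inner_sub_left]
    constructor <;> intro h <;> linarith
  rw [hset]
  exact convex_halfSpace_le (innerₛₗ ℝ (b - a)).isLinear _

theorem MonotoneOn.norm_sub_lineMap {α : Type*} [Preorder α] {f : α → E} {s : Set α} {p q : E}
    (hp : MonotoneOn (fun t => ‖f t - p‖) s) (hq : MonotoneOn (fun t => ‖f t - q‖) s)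
    {c : ℝ} (hc : c ∈ Icc (0 : ℝ) 1) : MonotoneOn (fun t => ‖f t - lineMap p q c‖) s :=
  fun _ hu _ hv huv =>
    (convex_setOf_norm_sub_le_norm_sub _ _).lineMap_mem (hp hu hv huv) (hq hu hv huv) hc

theorem HasDerivAt.norm_sub_sq {γ : ℝ → E} {γ' : E} {t : ℝ} (hγ : HasDerivAt γ γ' t) (x : E) :
    HasDerivAt (fun t => ‖γ t - x‖ ^ 2) (-(2 * ⟪γ', x - γ t⟫)) t := by
  convert (hγ.sub_const x).norm_sq using 1
  rw [real_inner_comm, ← neg_sub (γ t) x, inner_neg_left, mul_neg, neg_neg]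

theorem LipschitzWith.monotoneOn_norm_sub_iff_ae_inner_nonpos [FiniteDimensional ℝ E]
    {γ : ℝ → E} {L : NNReal} (hγ : LipschitzWith L γ) (x : E) (a b : ℝ) :
    MonotoneOn (fun t => ‖γ t - x‖) (Icc a b) ↔
      ∀ᵐ t ∂volume.restrict (Icc a b), ⟪deriv γ t, x - γ t⟫ ≤ 0 := by
  have hderiv : ∀ᵐ t, HasDerivAt (fun t => ‖γ t - x‖ ^ 2) (-(2 * ⟪deriv γ t, x - γ t⟫)) t := by
    filter_upwards [hγ.ae_differentiableAt] with t ht using ht.hasDerivAt.norm_sub_sq x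
  rw [monotoneOn_norm_iff_monotoneOn_norm_sq]
  constructor
  · intro hmono
    have hIoo : ∀ᵐ t ∂volume.restrict (Icc a b), t ∈ Ioo a b := by
      rw [← Measure.restrict_congr_set Ioo_ae_eq_Icc]
      exact ae_restrict_mem measurableSet_Ioo
    filter_upwards [ae_restrict_of_ae hderiv, hIoo] with t ht hmem
    have hnonneg := hmono.derivWithin_nonneg (x := t)
    rw [derivWithin_of_mem_nhds (Icc_mem_nhds hmem.1 hmem.2), ht.deriv] at hnonneg
    linarith
  · intro hi
    have hnorm : LipschitzWith L fun t => ‖γ t - x‖ := by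
      simpa [Function.comp_def, dist_eq_norm] using (LipschitzWith.dist_left x).comp hγ
    refine AbsolutelyContinuousOnInterval.monotoneOn_of_ae_deriv_nonneg ?_ ?_
    · simpa only [sq] using
        (hnorm.lipschitzOnWith.absolutelyContinuousOnInterval (a := a) (b := b)).fun_mul
          hnorm.lipschitzOnWith.absolutelyContinuousOnInterval
    · filter_upwards [ae_restrict_of_ae hderiv, hi] with t ht hit
      rw [ht.deriv]
      linarith

end InnerProductSpace

section Extension

variable {E : Type*} [NormedAddCommGroup E] [NormedSpace ℝ E]

noncomputable def prependSegment (γ : ℝ → E) (x : E) : ℝ → E :=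
  fun t => if t ≤ 0 then x + (1 + t) • (γ 0 - x) else γ t

theorem prependSegment_of_nonpos (γ : ℝ → E) (x : E) {t : ℝ} (ht : t ≤ 0) :
    prependSegment γ x t = lineMap x (γ 0) (1 + t) := by
  rw [prependSegment, if_pos ht, lineMap_apply_module', add_comm]

theorem prependSegment_of_nonneg (γ : ℝ → E) (x : E) {t : ℝ} (ht : 0 ≤ t) :
    prependSegment γ x t = γ t := by
  rcases ht.lt_or_eq with ht | rfl
  · rw [prependSegment, if_neg ht.not_ge]
  · rw [prependSegment_of_nonpos γ x le_rfl, add_zero, lineMap_apply_one]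

theorem prependSegment_neg_one (γ : ℝ → E) (x : E) : prependSegment γ x (-1) = x := by
  rw [prependSegment_of_nonpos γ x (by norm_num), add_neg_cancel, lineMap_apply_zero]

theorem prependSegment_eq_add (γ : ℝ → E) (x : E) :
    prependSegment γ x = fun t => γ (max t 0) + lineMap 0 (γ 0 - x) (min t 0) := by
  ext1 t
  rcases le_total t 0 with ht | ht
  · rw [prependSegment_of_nonpos γ x ht, max_eq_right ht, min_eq_left ht,
      lineMap_apply_module', lineMap_apply_module']
    module
  · rw [prependSegment_of_nonneg γ x ht, max_eq_left ht, min_eq_right ht, lineMap_apply_zero,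
      add_zero]

theorem LipschitzWith.prependSegment {γ : ℝ → E} {L : NNReal} (hγ : LipschitzWith L γ) (x : E) :
    LipschitzWith (L + nndist 0 (γ 0 - x)) (prependSegment γ x) := by
  rw [prependSegment_eq_add]
  simpa only [mul_one, Function.comp_def, id_eq] using
    (hγ.comp (LipschitzWith.id.max_const 0)).add
      ((lipschitzWith_lineMap (0 : E) (γ 0 - x)).comp (LipschitzWith.id.min_const 0))

end Extension

theorem SelfDistOn.monotoneOn_norm_sub {γ : ℝ → EuclideanSpace ℝ (Fin 2)} {s : Set ℝ}
    (hγ : SelfDistOn γ s) {t₀ : ℝ} (ht₀ : t₀ ∈ s) :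
    MonotoneOn (fun t => ‖γ t - γ t₀‖) (s ∩ Ici t₀) :=
  fun _ hu _ hv huv => hγ t₀ ht₀ _ hu.1 _ hv.1 hu.2 huv

theorem selfDistOn_prependSegment {γ : ℝ → EuclideanSpace ℝ (Fin 2)}
    {x : EuclideanSpace ℝ (Fin 2)} (hγ : SelfDistOn γ (Icc 0 1))
    (hx : MonotoneOn (fun t => ‖γ t - x‖) (Icc 0 1)) :
    SelfDistOn (prependSegment γ x) (Icc (-1) 1) := by
  intro t₁ h₁ t₂ h₂ t₃ h₃ h₁₂ h₂₃
  rcases le_or_gt t₁ 0 with ht₁ | ht₁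
  · set δ := prependSegment γ x
    have hseg : MonotoneOn (fun t => ‖δ t - δ t₁‖) (Icc t₁ 0) := by
      intro u hu v hv huv
      simp only [δ, ← dist_eq_norm, prependSegment_of_nonpos γ x hu.2,
        prependSegment_of_nonpos γ x hv.2, prependSegment_of_nonpos γ x ht₁, dist_lineMap_lineMap,
        Real.dist_eq, add_sub_add_left_eq_sub, abs_of_nonneg (sub_nonneg.2 hu.1),
        abs_of_nonneg (sub_nonneg.2 hv.1)]
      gcongr
    have hcurve : MonotoneOn (fun t => ‖δ t - δ t₁‖) (Icc 0 1) := by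
      have h0 := (hγ.monotoneOn_norm_sub (left_mem_Icc.2 zero_le_one)).mono fun t ht => ⟨ht, ht.1⟩
      refine (hx.norm_sub_lineMap h0 (c := 1 + t₁) ⟨by linarith [h₁.1], by linarith⟩).congr
        fun t ht => ?_
      simp only [δ, prependSegment_of_nonneg γ x ht.1, prependSegment_of_nonpos γ x ht₁]
    have hmono := hseg.union_right hcurve (isGreatest_Icc ht₁) (isLeast_Icc zero_le_one)
    rw [Icc_union_Icc_eq_Icc ht₁ zero_le_one] at hmono
    exact hmono ⟨h₁₂, h₂.2⟩ ⟨h₁₂.trans h₂₃, h₃.2⟩ h₂₃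
  · have hs : ∀ t ∈ Icc (-1 : ℝ) 1, t₁ ≤ t → t ∈ Icc (0 : ℝ) 1 :=
      fun t ht h => ⟨ht₁.le.trans h, ht.2⟩
    simp only [prependSegment_of_nonneg γ x ht₁.le,
      prependSegment_of_nonneg γ x (ht₁.le.trans h₁₂),
      prependSegment_of_nonneg γ x (ht₁.le.trans (h₁₂.trans h₂₃))]
    exact hγ t₁ (hs t₁ h₁ le_rfl) t₂ (hs t₂ h₂ h₁₂) t₃ (hs t₃ h₃ (h₁₂.trans h₂₃)) h₁₂ h₂₃

/-- For a Lipschitz self-distancing curve `γ : [0,1] → ℝ²` and a point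
`x₁`: `x₁` lies in all the half-planes bounded by the normal lines of `γ` (i.e.
`⟪γ'(t), x₁ - γ(t)⟫ ≤ 0` a.e.) iff `γ` can be extended backwards to a Lipschitz
self-distancing curve on `[-1,1]` starting at `x₁`; moreover in that case the extension
may be taken to be the straight segment from `x₁` to `γ(0)` followed by `γ`. -/
theorem stmt_17 (γ : ℝ → EuclideanSpace ℝ (Fin 2)) (L : NNReal) (hγ : LipschitzWith L γ)
    (hsd : SelfDistOn γ (Icc 0 1)) (x₁ : EuclideanSpace ℝ (Fin 2)) :
    ((∀ᵐ t ∂(volume.restrict (Icc (0:ℝ) 1)),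
        (inner ℝ (deriv γ t) (x₁ - γ t) : ℝ) ≤ 0) ↔
      (∃ (δ : ℝ → EuclideanSpace ℝ (Fin 2)) (L' : NNReal),
        LipschitzOnWith L' δ (Icc (-1) 1) ∧ SelfDistOn δ (Icc (-1) 1) ∧
        δ (-1) = x₁ ∧ ∀ t ∈ Icc (0:ℝ) 1, δ t = γ t)) ∧
    ((∀ᵐ t ∂(volume.restrict (Icc (0:ℝ) 1)),
        (inner ℝ (deriv γ t) (x₁ - γ t) : ℝ) ≤ 0) →
      SelfDistOn (fun t => if t ≤ 0 then x₁ + (1 + t) • (γ 0 - x₁) else γ t)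
        (Icc (-1) 1)) := by
  rw [← hγ.monotoneOn_norm_sub_iff_ae_inner_nonpos x₁ 0 1]
  refine ⟨⟨fun hx => ?_, ?_⟩, selfDistOn_prependSegment hsd⟩
  · exact ⟨prependSegment γ x₁, _, (hγ.prependSegment x₁).lipschitzOnWith,
      selfDistOn_prependSegment hsd hx, prependSegment_neg_one γ x₁,
      fun t ht => prependSegment_of_nonneg γ x₁ ht.1⟩
  · rintro ⟨δ, -, -, hδ, hδ_neg_one, hδγ⟩
    have hmono := (hδ.monotoneOn_norm_sub (t₀ := -1) ⟨le_rfl, by norm_num⟩).mono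
      fun t (ht : t ∈ Icc (0 : ℝ) 1) =>
        ⟨⟨by linarith [ht.1], ht.2⟩, show -1 ≤ t by linarith [ht.1]⟩
    refine hmono.congr fun t ht => ?_
    simp only [hδγ t ht, hδ_neg_one]
end

section
/- Let $\gamma_1 : [0,1] \to \mathbb{R}^2$ and $\gamma_2 : [2,3] \to \mathbb{R}^2$ be Lipschitz self-distancing curves, with $x_1^+ := \gamma_1(1)$ and $x_2^- := \gamma_2(2)$. Assume: (a) $x_2^- - x_1^+$ lies in the normal cone at $x_1^+$ of the convex hull of $\gamma_1([0,1])$, i.e. $\langle x_2^- - x_1^+, y - x_1^+ \rangle \le 0$ for all $y \in \gamma_1([0,1])$; (b) for almost every $t \in [2,3]$ and every $y \in \gamma_1([0,1])$, $\langle \gamma_2'(t), y - \gamma_2(t) \rangle \le 0$. Then the concatenated curve $\delta : [0,3] \to \mathbb{R}^2$ defined by $\delta(t) = \gamma_1(t)$ for $t \in [0,1]$, $\delta(t) = x_1^+ + (t-1)(x_2^- - x_1^+)$ for $t \in [1,2]$, and $\delta(t) = \gamma_2(t)$ for $t \in [2,3]$, is a self-distancing curve. -/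
/-!
For each starting time `t₀` it suffices that `t ↦ ‖δ t - δ t₀‖` is nondecreasing on `[t₀, 3]`,
which is checked piece by piece. Along `γ₂`, condition (b) says that `t ↦ ‖γ₂ t - p‖²` has a.e.
nonnegative derivative for every `p ∈ γ₁([0,1])`; being Lipschitz on `[2,3]`, it is absolutely
continuous, hence nondecreasing. Along the segment, (a) says that the direction of motion points
away from every such `p`. For `t₀` on the segment, `δ t₀` is a convex combination of `x₁⁺` and
`x₂⁻`, and the set of points from which a curve recedes is convex, since `‖z - p‖ ≤ ‖w - p‖` is a
half-space condition on `p`; `γ₂` recedes from `x₁⁺` by the above and from `x₂⁻` because it is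
self-distancing.
-/

open MeasureTheory Set

theorem selfDistOn_Icc_iff {γ : ℝ → EuclideanSpace ℝ (Fin 2)} {a b : ℝ} :
    SelfDistOn γ (Icc a b) ↔
      ∀ t₀ ∈ Icc a b, MonotoneOn (fun t => ‖γ t - γ t₀‖) (Icc t₀ b) := by
  constructor
  · intro h t₀ ht₀ x hx y hy hxy
    exact h t₀ ht₀ x ⟨ht₀.1.trans hx.1, hx.2⟩ y ⟨ht₀.1.trans hy.1, hy.2⟩ hx.1 hxy
  · intro h t₁ ht₁ t₂ ht₂ t₃ ht₃ h₁₂ h₂₃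
    exact h t₁ ht₁ ⟨h₁₂, ht₂.2⟩ ⟨h₁₂.trans h₂₃, ht₃.2⟩ h₂₃

theorem MonotoneOn.Icc_union_Icc {α β : Type*} [LinearOrder α] [Preorder β] {f : α → β}
    {a b c : α} (h₁ : MonotoneOn f (Icc a b)) (h₂ : MonotoneOn f (Icc b c)) (hab : a ≤ b)
    (hbc : b ≤ c) : MonotoneOn f (Icc a c) :=
  Icc_union_Icc_eq_Icc hab hbc ▸ h₁.union_right h₂ (isGreatest_Icc hab) (isLeast_Icc hbc)

theorem AbsolutelyContinuousOnInterval.le_of_ae_deriv_nonneg {f : ℝ → ℝ} {a b : ℝ}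
    (hf : AbsolutelyContinuousOnInterval f a b) (hab : a ≤ b)
    (hf' : ∀ᵐ t ∂volume.restrict (Icc a b), 0 ≤ deriv f t) : f a ≤ f b := by
  rw [← sub_nonneg, ← hf.integral_deriv_eq_sub]
  exact intervalIntegral.integral_nonneg_of_ae_restrict hab hf'

section InnerProductSpace

variable {E : Type*} [NormedAddCommGroup E] [InnerProductSpace ℝ E]

open scoped RealInnerProductSpace

theorem LipschitzWith.monotoneOn_norm_sub [FiniteDimensional ℝ E] {γ : ℝ → E} {L : NNReal}
    (hγ : LipschitzWith L γ) {p : E} {a b : ℝ}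
    (h : ∀ᵐ t ∂volume.restrict (Icc a b), ⟪deriv γ t, p - γ t⟫ ≤ 0) :
    MonotoneOn (fun t => ‖γ t - p‖) (Icc a b) := by
  intro x hx y hy hxy
  set f : ℝ → ℝ := fun t => ‖γ t - p‖
  have hf : LipschitzWith L f := by
    simpa [f, Function.comp_def, ← dist_eq_norm] using (LipschitzWith.dist_left p).comp hγ
  have hf₂ : AbsolutelyContinuousOnInterval (f * f) x y :=
    have hac := hf.lipschitzOnWith (s := uIcc x y) |>.absolutelyContinuousOnInterval
    hac.mul hac
  have hderiv : ∀ t, DifferentiableAt ℝ γ t → deriv (f * f) t = -2 * ⟪deriv γ t, p - γ t⟫ := by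
    intro t ht
    have hsub := ht.hasDerivAt.sub_const p
    have hff : f * f = fun t => ⟪γ t - p, γ t - p⟫ := by
      ext t; exact (real_inner_self_eq_norm_mul_norm _).symm
    rw [hff, (hsub.inner ℝ hsub).deriv, real_inner_comm, ← neg_sub p, inner_neg_right]
    ring
  refine (mul_self_le_mul_self_iff (norm_nonneg _) (norm_nonneg _)).mpr
    (hf₂.le_of_ae_deriv_nonneg hxy ?_)
  filter_upwards [ae_restrict_of_ae hγ.ae_differentiableAt_real,
    ae_restrict_of_ae_restrict_of_subset (Icc_subset_Icc hx.1 hy.2) h] with t hdiff ht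
  rw [hderiv t hdiff]
  linarith

theorem monotoneOn_norm_add_smul_sub {x v p : E} (h : ⟪v, p - x⟫ ≤ 0) (a : ℝ) :
    MonotoneOn (fun t => ‖x + (t - a) • v - p‖) (Ici a) := by
  have hxv : 0 ≤ ⟪x - p, v⟫ := by
    rw [real_inner_comm, ← neg_sub p, inner_neg_right]
    linarith
  have expand : ∀ s : ℝ,
      ‖x + s • v - p‖ ^ 2 = ‖x - p‖ ^ 2 + 2 * s * ⟪x - p, v⟫ + s ^ 2 * ‖v‖ ^ 2 := by
    intro s
    rw [show x + s • v - p = (x - p) + s • v by abel, norm_add_sq_real, real_inner_smul_right,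
      norm_smul, Real.norm_eq_abs, mul_pow, sq_abs]
    ring
  intro s hs t ht hst
  refine (pow_le_pow_iff_left₀ (norm_nonneg _) (norm_nonneg _) two_ne_zero).mp ?_
  simp only [expand]
  have hs₀ : 0 ≤ s - a := sub_nonneg.mpr hs
  have hst' : s - a ≤ t - a := by linarith
  gcongr

theorem convex_setOf_monotoneOn_norm_sub {α : Type*} [Preorder α] (γ : α → E) (s : Set α) :
    Convex ℝ {p | MonotoneOn (fun t => ‖γ t - p‖) s} := by
  have halfSpace : ∀ z w p : E, ‖z - p‖ ≤ ‖w - p‖ ↔ ‖z‖ ^ 2 - ‖w‖ ^ 2 ≤ 2 * ⟪z - w, p⟫ := by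
    intro z w p
    rw [← pow_le_pow_iff_left₀ (norm_nonneg _) (norm_nonneg _) two_ne_zero, norm_sub_sq_real,
      norm_sub_sq_real, inner_sub_left]
    constructor <;> intro h <;> linarith
  intro p hp q hq a b ha hb hab x hx y hy hxy
  have hpxy := (halfSpace _ _ p).mp (hp hx hy hxy)
  have hqxy := (halfSpace _ _ q).mp (hq hx hy hxy)
  refine (halfSpace _ _ _).mpr ?_
  rw [inner_add_right, inner_smul_right, inner_smul_right]
  nlinarith [mul_le_mul_of_nonneg_left hpxy ha, mul_le_mul_of_nonneg_left hqxy hb]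

noncomputable def joinBySegment (γ₁ γ₂ : ℝ → E) : ℝ → E := fun t =>
  if t ≤ 1 then γ₁ t else if t ≤ 2 then γ₁ 1 + (t - 1) • (γ₂ 2 - γ₁ 1) else γ₂ t

variable {γ₁ γ₂ : ℝ → E} {t : ℝ}

theorem joinBySegment_of_le_one (ht : t ≤ 1) : joinBySegment γ₁ γ₂ t = γ₁ t :=
  if_pos ht

theorem joinBySegment_of_mem_Icc (ht : t ∈ Icc 1 2) :
    joinBySegment γ₁ γ₂ t = γ₁ 1 + (t - 1) • (γ₂ 2 - γ₁ 1) := by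
  rcases ht.1.eq_or_lt with rfl | h
  · simp [joinBySegment]
  · simp [joinBySegment, h.not_ge, ht.2]

theorem joinBySegment_of_two_le (ht : 2 ≤ t) : joinBySegment γ₁ γ₂ t = γ₂ t := by
  rcases ht.eq_or_lt with rfl | h
  · rw [joinBySegment_of_mem_Icc ⟨one_le_two, le_rfl⟩]
    module
  · simp [joinBySegment, h.not_ge, (one_lt_two.trans h).not_ge]

theorem monotoneOn_norm_joinBySegment_sub {p : E} {b : ℝ} (hb : 2 ≤ b)
    (hp : ⟪γ₂ 2 - γ₁ 1, p - γ₁ 1⟫ ≤ 0) (h₂ : MonotoneOn (fun t => ‖γ₂ t - p‖) (Icc 2 b)) :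
    MonotoneOn (fun t => ‖joinBySegment γ₁ γ₂ t - p‖) (Icc 1 b) := by
  refine MonotoneOn.Icc_union_Icc ?_ ?_ one_le_two hb
  · refine ((monotoneOn_norm_add_smul_sub hp 1).mono Icc_subset_Ici_self).congr fun t ht => ?_
    simp only [joinBySegment_of_mem_Icc ht]
  · exact h₂.congr fun t ht => by simp only [joinBySegment_of_two_le ht.1]

theorem monotoneOn_norm_joinBySegment_sub_joinBySegment {t₀ b : ℝ} (ht₀ : t₀ ∈ Icc 1 2)
    (hb : 2 ≤ b) (h₁ : MonotoneOn (fun t => ‖γ₂ t - γ₁ 1‖) (Icc 2 b))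
    (h₂ : MonotoneOn (fun t => ‖γ₂ t - γ₂ 2‖) (Icc 2 b)) :
    MonotoneOn (fun t => ‖joinBySegment γ₁ γ₂ t - joinBySegment γ₁ γ₂ t₀‖) (Icc t₀ b) := by
  rw [joinBySegment_of_mem_Icc ht₀]
  set x := γ₁ 1 + (t₀ - 1) • (γ₂ 2 - γ₁ 1)
  refine MonotoneOn.Icc_union_Icc ?_ ?_ ht₀.2 hb
  · have hx : ⟪γ₂ 2 - γ₁ 1, x - x⟫ ≤ 0 := by simp
    refine ((monotoneOn_norm_add_smul_sub hx t₀).mono Icc_subset_Ici_self).congr fun t ht => ?_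
    simp only [joinBySegment_of_mem_Icc ⟨ht₀.1.trans ht.1, ht.2⟩, x]
    congr 2
    module
  · have hmem : x ∈ {p | MonotoneOn (fun t => ‖γ₂ t - p‖) (Icc 2 b)} :=
      (convex_setOf_monotoneOn_norm_sub γ₂ (Icc 2 b)).add_smul_sub_mem h₁ h₂
        ⟨by linarith [ht₀.1], by linarith [ht₀.2]⟩
    exact hmem.congr fun t ht => by simp only [joinBySegment_of_two_le ht.1]

end InnerProductSpace

theorem stmt_19_general (γ₁ γ₂ : ℝ → EuclideanSpace ℝ (Fin 2)) (L₂ : NNReal)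
    (h₂ : LipschitzWith L₂ γ₂)
    (sd₁ : SelfDistOn γ₁ (Icc 0 1)) (sd₂ : SelfDistOn γ₂ (Icc 2 3))
    (ha : ∀ y ∈ γ₁ '' Icc (0:ℝ) 1, (inner ℝ (γ₂ 2 - γ₁ 1) (y - γ₁ 1) : ℝ) ≤ 0)
    (hb : ∀ᵐ t ∂(volume.restrict (Icc (2:ℝ) 3)),
      ∀ y ∈ γ₁ '' Icc (0:ℝ) 1, (inner ℝ (deriv γ₂ t) (y - γ₂ t) : ℝ) ≤ 0) :
    SelfDistOn
      (fun t => if t ≤ 1 then γ₁ t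
        else if t ≤ 2 then γ₁ 1 + (t - 1) • (γ₂ 2 - γ₁ 1) else γ₂ t)
      (Icc 0 3) := by
  change SelfDistOn (joinBySegment γ₁ γ₂) (Icc 0 3)
  have hK : ∀ p ∈ γ₁ '' Icc 0 1, MonotoneOn (fun t => ‖γ₂ t - p‖) (Icc 2 3) := fun p hp =>
    h₂.monotoneOn_norm_sub (by filter_upwards [hb] with t ht using ht p hp)
  rw [selfDistOn_Icc_iff] at sd₁ sd₂ ⊢
  intro t₀ ht₀
  rcases le_total t₀ 1 with h01 | h10
  · have hmem : γ₁ t₀ ∈ γ₁ '' Icc 0 1 := mem_image_of_mem γ₁ ⟨ht₀.1, h01⟩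
    rw [joinBySegment_of_le_one h01]
    refine MonotoneOn.Icc_union_Icc ?_
      (monotoneOn_norm_joinBySegment_sub (by norm_num) (ha _ hmem) (hK _ hmem)) h01 (by norm_num)
    exact (sd₁ t₀ ⟨ht₀.1, h01⟩).congr fun t ht => by simp only [joinBySegment_of_le_one ht.2]
  rcases le_total t₀ 2 with h02 | h20
  · exact monotoneOn_norm_joinBySegment_sub_joinBySegment ⟨h10, h02⟩ (by norm_num)
      (hK _ (mem_image_of_mem γ₁ ⟨zero_le_one, le_rfl⟩)) (sd₂ 2 ⟨le_rfl, by norm_num⟩)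
  · rw [joinBySegment_of_two_le h20]
    exact (sd₂ t₀ ⟨h20, ht₀.2⟩).congr fun t ht => by
      simp only [joinBySegment_of_two_le (h20.trans ht.1)]

/-- Let `γ₁ : [0,1] → ℝ²` and `γ₂ : [2,3] → ℝ²` be Lipschitz
self-distancing curves with `x₁⁺ = γ₁(1)`, `x₂⁻ = γ₂(2)`. If (a) `x₂⁻ - x₁⁺` lies in the
normal cone at `x₁⁺` of the convex hull of `γ₁([0,1])`, and (b) for a.e. `t ∈ [2,3]` and
every `y ∈ γ₁([0,1])` one has `⟪γ₂'(t), y - γ₂(t)⟫ ≤ 0`, then the concatenation of `γ₁`,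
the segment from `x₁⁺` to `x₂⁻`, and `γ₂` is a self-distancing curve on `[0,3]`. -/
theorem stmt_19 (γ₁ γ₂ : ℝ → EuclideanSpace ℝ (Fin 2)) (L₁ L₂ : NNReal)
    (h₁ : LipschitzWith L₁ γ₁) (h₂ : LipschitzWith L₂ γ₂)
    (sd₁ : SelfDistOn γ₁ (Icc 0 1)) (sd₂ : SelfDistOn γ₂ (Icc 2 3))
    (ha : ∀ y ∈ γ₁ '' Icc (0:ℝ) 1, (inner ℝ (γ₂ 2 - γ₁ 1) (y - γ₁ 1) : ℝ) ≤ 0)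
    (hb : ∀ᵐ t ∂(volume.restrict (Icc (2:ℝ) 3)),
      ∀ y ∈ γ₁ '' Icc (0:ℝ) 1, (inner ℝ (deriv γ₂ t) (y - γ₂ t) : ℝ) ≤ 0) :
    SelfDistOn
      (fun t => if t ≤ 1 then γ₁ t
        else if t ≤ 2 then γ₁ 1 + (t - 1) • (γ₂ 2 - γ₁ 1) else γ₂ t)
      (Icc 0 3) :=
  stmt_19_general γ₁ γ₂ L₂ h₂ sd₁ sd₂ ha hb
end
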